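/- arXiv:2505.08140 — 11 statements merged into one kernel-verified Lean document; each statement's English description precedes it below -/
import Mathlib

section
/- For every n there exists a (0,1)-BAPO solving the Index problem on all instances with an n-bit string, i.e., a BAPO with prefix bandwidth 0 and attention bandwidth 1 whose suffix oracle always outputs the indexed bit. -/
open Finset Filter Asymptotics

/-- An `(a, b)`-BAPO (bounded attention prefix oracle): a prefix oracle `f` outputting
`a` bits, a binary attention function `g`, and a suffix oracle `h` that receives the
prefix-oracle output, an attended set of at most `b` (token, 1-based index) pairs from
the prefix, the suffix, and the split index. -/
structure BAPO (Sigma : Type) (Out : Type) (a b : ℕ) where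
  f : List Sigma → (Fin a → Bool)
  g : List Sigma → ℕ → Sigma → ℕ → Bool
  h : (Fin a → Bool) → Finset (Sigma × ℕ) → List Sigma → ℕ → Out

namespace BAPO

variable {Sigma Out : Type} {a b : ℕ}

/-- The set `𝔾 = {(xᵢ, i) : 1 ≤ i ≤ k, g(suffix, k, xᵢ, i) = 1}` of attended
candidates for a given prefix and suffix. -/
noncomputable def cands (M : BAPO Sigma Out a b) (pre suf : List Sigma) :
    Finset (Sigma × ℕ) :=
  letI := Classical.decEq Sigma
  (Finset.univ.filter fun i : Fin pre.length =>
      M.g suf pre.length (pre.get i) ((i : ℕ) + 1) = true).image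
    fun i => (pre.get i, (i : ℕ) + 1)

/-- The BAPO outputs `y` on input `x`: for every split index `k < |x|` and every
attended set `G ⊆ 𝔾` with `|G| = min b |𝔾|`, the suffix oracle outputs `y`. -/
def SolvesOn (M : BAPO Sigma Out a b) (x : List Sigma) (y : Out) : Prop :=
  ∀ k, k < x.length →
    ∀ G : Finset (Sigma × ℕ), G ⊆ M.cands (x.take k) (x.drop k) →
      G.card = min b (M.cands (x.take k) (x.drop k)).card →
      M.h (M.f (x.take k)) G (x.drop k) k = y

end BAPO

theorem BAPO.cands_eq_of_g_eq_decide {Sigma Out : Type} {a b : ℕ} (M : BAPO Sigma Out a b)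
    (pre suf : List Sigma) (p : ℕ) (hg : ∀ s j, M.g suf pre.length s j = decide (j = p + 1)) :
    M.cands pre suf = if h : p < pre.length then {(pre[p], p + 1)} else ∅ := by
  ext ⟨s, j⟩
  simp only [BAPO.cands, mem_image, mem_filter, mem_univ, true_and, hg, decide_eq_true_eq]
  split_ifs with h
  · simp only [mem_singleton, Prod.mk.injEq]
    constructor
    · rintro ⟨q, hq, rfl, rfl⟩
      obtain rfl : q = ⟨p, h⟩ := Fin.ext (by simp only; omega)
      simp
    · rintro ⟨rfl, rfl⟩
      exact ⟨⟨p, h⟩, rfl, rfl, rfl⟩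
  · simp only [notMem_empty, iff_false, not_exists, not_and]
    intro q hq
    omega

theorem Finset.eq_of_subset_of_card_eq_min_one {α : Type*} {s t : Finset α} (hts : t ⊆ s)
    (hcard : t.card = min 1 s.card) (hs : s.card ≤ 1) : t = s :=
  eq_of_subset_of_card_le hts (by omega)

/-- The attention function reads the index `i` off the last token and attends only to position
`i + 1`: the bit `xᵢ` is then either the single attended token (when `i < k`) or a token of the
suffix. -/
def indexBAPO (n : ℕ) : BAPO (Bool ⊕ Fin n) Bool 0 1 where
  f _ := Fin.elim0
  g suf _ _ j :=
    match suf.getLast? with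
    | some (.inr i) => decide (j = i.val + 1)
    | _ => false
  h _ G suf k :=
    match suf.getLast? with
    | some (.inr i) =>
      if i.val < k then decide ((.inl true, i.val + 1) ∈ G)
      else decide (suf[i.val - k]? = some (.inl true))
    | _ => false

theorem indexBAPO_cands {n : ℕ} (pre suf : List (Bool ⊕ Fin n)) (i : Fin n) :
    (indexBAPO n).cands pre (suf ++ [.inr i]) =
      if h : i.val < pre.length then {(pre[i.val], i.val + 1)} else ∅ :=
  BAPO.cands_eq_of_g_eq_decide _ _ _ _ fun _ _ => by simp [indexBAPO]

theorem indexBAPO_h {n : ℕ} (c : Fin 0 → Bool) (G : Finset ((Bool ⊕ Fin n) × ℕ))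
    (suf : List (Bool ⊕ Fin n)) (k : ℕ) (i : Fin n) :
    (indexBAPO n).h c G (suf ++ [.inr i]) k =
      if i.val < k then decide ((.inl true, i.val + 1) ∈ G)
      else decide ((suf ++ [.inr i])[i.val - k]? = some (.inl true)) := by
  simp [indexBAPO]

/-- **Index is BAPO-easy.** For every `n` there is a `(0, 1)`-BAPO solving the
`Index` problem: on the instance `x₁ … xₙ i` (an `n`-bit string over tokens
`Sum.inl` followed by an index token `Sum.inr i`), the BAPO always outputs the
indexed bit `x i`. -/
theorem index_has_zero_one_BAPO (n : ℕ) :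
    ∃ M : BAPO (Bool ⊕ Fin n) Bool 0 1,
      ∀ (x : Fin n → Bool) (i : Fin n),
        M.SolvesOn (List.ofFn (fun j => Sum.inl (x j)) ++ [Sum.inr i]) (x i) := by
  refine ⟨indexBAPO n, fun x i k hk G hGsub hGcard => ?_⟩
  set A : List (Bool ⊕ Fin n) := List.ofFn fun j => .inl (x j)
  have hkA : k ≤ A.length := by simpa [Nat.lt_succ_iff] using hk
  have hpre : (A.take k).length = k := by simpa using hkA
  rw [List.take_append_of_le_length hkA, List.drop_append_of_le_length hkA] at hGsub hGcard ⊢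
  rw [indexBAPO_cands] at hGsub hGcard
  obtain rfl := eq_of_subset_of_card_eq_min_one hGsub hGcard (by split <;> simp)
  rw [indexBAPO_h]
  by_cases hik : i.val < k
  · simp [hik, hpre, A]
  · have hi : i.val - k < (A.drop k).length := by simp [A]; omega
    simp [hik, List.getElem?_append_left hi, Nat.add_sub_cancel' (not_lt.mp hik), A]
end

section
/- For every n there exists a (1,1)-BAPO solving the Equality problem, i.e., a BAPO with prefix bandwidth 1 bit and attention bandwidth 1 token that correctly decides whether the two n-bit strings are equal for every prefix–suffix split. -/
open Finset Filter Asymptotics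

namespace BAPO

variable {Sigma Out : Type} {a b : ℕ}

/-- The BAPO outputs a *correct* answer (one satisfying `good`) on input `x`:
for every split index `k < |x|` and every attended set `G ⊆ 𝔾` with
`|G| = min b |𝔾|`, the suffix oracle's output satisfies `good`. -/
def SolvesOnP (M : BAPO Sigma Out a b) (x : List Sigma) (good : Out → Prop) : Prop :=
  ∀ k, k < x.length →
    ∀ G : Finset (Sigma × ℕ), G ⊆ M.cands (x.take k) (x.drop k) →
      G.card = min b (M.cands (x.take k) (x.drop k)).card →
      good (M.h (M.f (x.take k)) G (x.drop k) k)

end BAPO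

/-!
Equality asks whether the word `w = x | y` agrees with its shift by `n + 1` on the first `n`
positions. For any split, each comparison `w[j] = w[j + n + 1]` lies entirely in the prefix,
entirely in the suffix, or straddles the split. The single prefix bit records whether all
comparisons inside the prefix succeed; the suffix oracle checks those inside the suffix itself;
and a straddling comparison fails exactly when the attention function, which sees `w[j]` together
with the whole suffix, flags position `j`. Since at least one flagged token is always attended,
one token of attention suffices to detect that some straddling comparison fails.
-/

theorem Finset.eq_empty_iff_of_subset_of_card_eq_min {α : Type} {b : ℕ} {G C : Finset α}
    (hb : 0 < b) (hsub : G ⊆ C) (hcard : G.card = min b C.card) : G = ∅ ↔ C = ∅ := by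
  constructor
  · rintro rfl
    rw [← Finset.card_eq_zero]
    simp only [Finset.card_empty] at hcard
    omega
  · rintro rfl
    exact Finset.subset_empty.mp hsub

theorem List.eq_iff_forall_getElem?_append_singleton_append {α : Type} {X Y : List α}
    (c : α) (h : X.length = Y.length) :
    X = Y ↔ ∀ j ∈ Finset.range X.length,
      (X ++ [c] ++ Y)[j]? = (X ++ [c] ++ Y)[j + (X.length + 1)]? := by
  have hX {j : ℕ} (hj : j < X.length) : (X ++ [c] ++ Y)[j]? = X[j]? := by
    rw [List.getElem?_append_left (by simpa using Nat.lt_succ_of_lt hj),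
      List.getElem?_append_left hj]
  have hY (j : ℕ) : (X ++ [c] ++ Y)[j + (X.length + 1)]? = Y[j]? := by
    rw [List.getElem?_append_right (by simp), List.length_append, List.length_singleton,
      Nat.add_sub_cancel]
  simp only [Finset.mem_range, List.ext_getElem?_iff]
  refine ⟨fun hXY j hj => by rw [hX hj, hY, hXY], fun hXY j => ?_⟩
  rcases lt_or_ge j X.length with hj | hj
  · rw [← hX hj, ← hY, hXY j hj]
  · rw [List.getElem?_eq_none hj, List.getElem?_eq_none (h ▸ hj)]

namespace BAPO

theorem cands_eq_empty_iff {Sigma Out : Type} {a b : ℕ} (M : BAPO Sigma Out a b)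
    (pre suf : List Sigma) :
    M.cands pre suf = ∅ ↔
      ∀ (i : ℕ) (hi : i < pre.length), M.g suf pre.length pre[i] (i + 1) = false := by
  classical
  simp [cands, Finset.filter_eq_empty_iff, Fin.forall_iff]

variable {Sigma : Type} [DecidableEq Sigma] {b : ℕ}

/-- Decides `∀ j ∈ S, w[j]? = w[j + d]?`. The attention function receives the 1-based index `i`
of the prefix token `σ = w[i - 1]`, and flags it when its partner `w[i - 1 + d]` lies in the
suffix and differs from it. -/
@[simps]
def shiftEq (S : Finset ℕ) (d : ℕ) : BAPO Sigma Bool 1 b where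
  f pre _ := decide (∀ j ∈ S, j + d < pre.length → pre[j]? = pre[j + d]?)
  g suf k σ i := decide (i - 1 ∈ S ∧ k ≤ i - 1 + d ∧ suf[i - 1 + d - k]? ≠ some σ)
  h bits G suf k := bits 0 && decide (G = ∅) &&
    decide (∀ j ∈ S, k ≤ j → suf[j - k]? = suf[j + d - k]?)

theorem shiftEq_solvesOn (hb : 0 < b) (S : Finset ℕ) (d : ℕ) (w : List Sigma) :
    (shiftEq S d : BAPO Sigma Bool 1 b).SolvesOn w (decide (∀ j ∈ S, w[j]? = w[j + d]?)) := by
  intro k hk G hsub hcard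
  have hpre : (w.take k).length = k := List.length_take_of_le hk.le
  have hsuf {j : ℕ} (hj : k ≤ j) : (w.drop k)[j - k]? = w[j]? := by
    rw [List.getElem?_drop, Nat.add_sub_cancel' hj]
  have hprefix : (∀ j ∈ S, j + d < k → (w.take k)[j]? = (w.take k)[j + d]?) ↔
      ∀ j ∈ S, j + d < k → w[j]? = w[j + d]? := by
    refine forall₂_congr fun j _ => imp_congr_right fun hjd => ?_
    rw [List.getElem?_take_of_lt (by omega), List.getElem?_take_of_lt hjd]
  have hsuffix : (∀ j ∈ S, k ≤ j → (w.drop k)[j - k]? = (w.drop k)[j + d - k]?) ↔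
      ∀ j ∈ S, k ≤ j → w[j]? = w[j + d]? :=
    forall₂_congr fun j _ => imp_congr_right fun hkj => by rw [hsuf hkj, hsuf (by omega)]
  have hcross : (shiftEq S d : BAPO Sigma Bool 1 b).cands (w.take k) (w.drop k) = ∅ ↔
      ∀ j ∈ S, j < k → k ≤ j + d → w[j]? = w[j + d]? := by
    simp only [cands_eq_empty_iff, shiftEq_g, hpre, List.getElem_take, Nat.add_sub_cancel,
      decide_eq_false_iff_not, not_and, not_not]
    constructor
    · intro h j hjS hjk hkd
      rw [← hsuf hkd, h j (by omega) hjS hkd, List.getElem?_eq_getElem (by omega)]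
    · intro h j hjk hjS hkd
      rw [hsuf hkd, ← h j hjS (by omega) hkd, List.getElem?_eq_getElem]
  simp only [shiftEq_f, shiftEq_h, Bool.and_eq_decide, decide_eq_true_eq, decide_eq_decide,
    Finset.eq_empty_iff_of_subset_of_card_eq_min hb hsub hcard, hpre, hprefix, hsuffix, hcross]
  constructor
  · rintro ⟨⟨hprefix, hcross⟩, hsuffix⟩ j hj
    rcases lt_or_ge (j + d) k with hjd | hjd
    · exact hprefix j hj hjd
    rcases lt_or_ge j k with hjk | hjk
    · exact hcross j hj hjk hjd
    · exact hsuffix j hj hjk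
  · intro h
    exact ⟨⟨fun j hj _ => h j hj, fun j hj _ _ => h j hj⟩, fun j hj _ => h j hj⟩

end BAPO

/-- **Equality is BAPO-easy.** For every `n` there is a `(1, 1)`-BAPO solving
`Equality`: on the instance `x | y` (over the alphabet `{0, 1, |}`, encoded as
`Option Bool` with `none` the divider token), it correctly decides whether the
two `n`-bit strings `x` and `y` are equal, for every prefix–suffix split. -/
theorem equality_has_one_one_BAPO (n : ℕ) :
    ∃ M : BAPO (Option Bool) Bool 1 1,
      ∀ x y : Fin n → Bool,
        M.SolvesOn
          (List.ofFn (fun j => some (x j)) ++ [none] ++ List.ofFn (fun j => some (y j)))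
          (decide (x = y)) := by
  refine ⟨BAPO.shiftEq (Finset.range n) (n + 1), fun x y => ?_⟩
  have hxy : x = y ↔ List.ofFn (fun j => some (x j)) = List.ofFn (fun j => some (y j)) := by
    simp [List.ofFn_inj, funext_iff]
  have hsplit := List.eq_iff_forall_getElem?_append_singleton_append none
    (List.length_ofFn.trans List.length_ofFn.symm :
      (List.ofFn (fun j => some (x j))).length = (List.ofFn (fun j => some (y j))).length)
  rw [List.length_ofFn] at hsplit
  rw [decide_eq_decide.mpr (hxy.trans hsplit)]
  exact BAPO.shiftEq_solvesOn one_pos _ _ _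
end

section
/- For every n there exists a (1,1)-BAPO solving the Disjointness problem, i.e., a BAPO with prefix bandwidth 1 bit and attention bandwidth 1 token that correctly decides whether the two sets encoded by n-bit indicator strings are disjoint for every prefix–suffix split. -/
open Finset Filter Asymptotics

/-- The disjointness BAPO. -/
def disjBAPO (n : ℕ) : BAPO (Option Bool) Bool 1 1 where
  f pre _ := decide (∃ m < pre.length,
    pre[m]? = some (some true) ∧ pre[m+n+1]? = some (some true))
  g suf k tok i := decide (tok = some true ∧ k ≤ n + i ∧ suf[n+i-k]? = some (some true))
  h o G suf _ := decide (o 0 ≠ true ∧ G = ∅ ∧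
    ∀ m < suf.length, ¬(suf[m]? = some (some true) ∧ suf[m+n+1]? = some (some true)))

/-- **Disjointness is BAPO-easy.** For every `n` there is a `(1, 1)`-BAPO solving
`Disjointness`: on the instance `x | y` (over the alphabet `{0, 1, |}`, encoded as
`Option Bool` with `none` the divider token), it correctly decides whether the two
sets encoded by the `n`-bit indicator strings `x` and `y` are disjoint, i.e.
whether there is no index `i` with `x i = y i = 1`, for every prefix–suffix split. -/
theorem disjointness_has_one_one_BAPO (n : ℕ) :
    ∃ M : BAPO (Option Bool) Bool 1 1,
      ∀ x y : Fin n → Bool,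
        M.SolvesOn
          (List.ofFn (fun j => some (x j)) ++ [none] ++ List.ofFn (fun j => some (y j)))
          (decide (∀ i : Fin n, ¬(x i = true ∧ y i = true))) := by
  classical
  refine ⟨disjBAPO n, ?_⟩
  intro x y k hk G hG hcard
  set w : List (Option Bool) := List.ofFn (fun j => some (x j)) ++ [none] ++ List.ofFn (fun j => some (y j)) with hwdef
  have hlen : w.length = 2*n+1 := by
    simp only [hwdef, List.length_append, List.length_ofFn, List.length_cons, List.length_nil]
    omega
  rw [hlen] at hk
  -- characterization of where `some true` occurs in `w`
  have htrue : ∀ m : ℕ, (w[m]? = some (some true)) ↔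
      ((∃ i : Fin n, (i:ℕ) = m ∧ x i = true) ∨ (∃ i : Fin n, n+1+(i:ℕ) = m ∧ y i = true)) := by
    intro m
    simp only [hwdef, List.getElem?_append, List.getElem?_ofFn, List.ofFnNthVal,
      List.length_append, List.length_ofFn, List.length_cons, List.length_nil]
    constructor
    · intro h
      split_ifs at h with h1 h2 h3
      · exact Or.inl ⟨⟨m, h2⟩, rfl, by simpa using h⟩
      · have hmn : m - n = 0 := by omega
        rw [hmn] at h; simp at h
      · exact Or.inr ⟨⟨m - (n+0+1), h3⟩, by simp only [Fin.val_mk]; omega,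
          by simpa using h⟩
    · rintro (⟨i, rfl, hxi⟩ | ⟨i, rfl, hyi⟩)
      · rw [if_pos (by omega), if_pos i.isLt, dif_pos i.isLt]
        simp [hxi]
      · rw [if_neg (by omega), dif_pos (show n+1+(i:ℕ) - (n+0+1) < n by omega)]
        have : (⟨n+1+(i:ℕ) - (n+0+1), by omega⟩ : Fin n) = i := by
          ext
          simp only [Fin.val_mk]
          omega
        rw [this, hyi]
  -- paired characterization
  have hpair : ∀ p : ℕ, (w[p]? = some (some true) ∧ w[p+n+1]? = some (some true)) ↔
      ∃ i : Fin n, (i:ℕ) = p ∧ x i = true ∧ y i = true := by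
    intro p
    constructor
    · rintro ⟨h1, h2⟩
      rw [htrue] at h1 h2
      rcases h2 with ⟨i2, hi2, _⟩ | ⟨i2, hi2, hy2⟩
      · exact absurd hi2 (by have := i2.isLt; omega)
      · have hip : (i2:ℕ) = p := by omega
        rcases h1 with ⟨i1, hi1, hx1⟩ | ⟨i1, hi1, _⟩
        · have : i1 = i2 := by ext; omega
          exact ⟨i2, hip, this ▸ hx1, hy2⟩
        · exact absurd hi1 (by have := i1.isLt; have := i2.isLt; omega)
    · rintro ⟨i, rfl, hxi, hyi⟩
      exact ⟨(htrue _).mpr (Or.inl ⟨i, rfl, hxi⟩), (htrue _).mpr (Or.inr ⟨i, by omega, hyi⟩)⟩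
  have hprelen : (w.take k).length = k := by rw [List.length_take]; omega
  have hsuflen : (w.drop k).length = 2*n+1-k := by rw [List.length_drop]; omega
  -- condition A: collision entirely inside the prefix
  have hA : (∃ m < (w.take k).length, (w.take k)[m]? = some (some true) ∧
        (w.take k)[m+n+1]? = some (some true)) ↔
      (∃ i : Fin n, x i = true ∧ y i = true ∧ (i:ℕ)+n+1 < k) := by
    constructor
    · rintro ⟨m, hm, h1, h2⟩
      rw [hprelen] at hm
      rw [List.getElem?_take, if_pos hm] at h1
      rw [List.getElem?_take] at h2
      by_cases c2 : m+n+1 < k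
      · rw [if_pos c2] at h2
        obtain ⟨i, hip, hxi, hyi⟩ := (hpair m).mp ⟨h1, h2⟩
        exact ⟨i, hxi, hyi, by omega⟩
      · rw [if_neg c2] at h2
        exact absurd h2 (by simp)
    · rintro ⟨i, hxi, hyi, hik⟩
      obtain ⟨h1, h2⟩ := (hpair (i:ℕ)).mpr ⟨i, rfl, hxi, hyi⟩
      refine ⟨(i:ℕ), by omega, ?_, ?_⟩ <;>
        rw [List.getElem?_take, if_pos (by omega)] <;> assumption
  -- condition C: collision entirely inside the suffix
  have hC : (∃ m < (w.drop k).length, (w.drop k)[m]? = some (some true) ∧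
        (w.drop k)[m+n+1]? = some (some true)) ↔
      (∃ i : Fin n, x i = true ∧ y i = true ∧ k ≤ (i:ℕ)) := by
    constructor
    · rintro ⟨m, hm, h1, h2⟩
      rw [List.getElem?_drop] at h1 h2
      have h2' : w[(k+m)+n+1]? = some (some true) := by
        rw [show (k+m)+n+1 = k+(m+n+1) by omega]; exact h2
      obtain ⟨i, hip, hxi, hyi⟩ := (hpair (k+m)).mp ⟨h1, h2'⟩
      exact ⟨i, hxi, hyi, by omega⟩
    · rintro ⟨i, hxi, hyi, hik⟩
      obtain ⟨h1, h2⟩ := (hpair (i:ℕ)).mpr ⟨i, rfl, hxi, hyi⟩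
      have hiw : (i:ℕ) < w.length := by have := i.isLt; omega
      refine ⟨(i:ℕ) - k, by omega, ?_, ?_⟩
      · rw [List.getElem?_drop, show k+((i:ℕ)-k) = (i:ℕ) by omega]; exact h1
      · rw [List.getElem?_drop, show k+((i:ℕ)-k+n+1) = (i:ℕ)+n+1 by omega]; exact h2
  -- condition B: the candidate set is nonempty iff a collision straddles the split
  have hB : ((disjBAPO n).cands (w.take k) (w.drop k)).Nonempty ↔
      (∃ i : Fin n, x i = true ∧ y i = true ∧ (i:ℕ) < k ∧ k ≤ (i:ℕ)+n+1) := by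
    rw [BAPO.cands]
    simp only [Finset.image_nonempty, Finset.filter_nonempty_iff, Finset.mem_univ, true_and,
      disjBAPO, decide_eq_true_eq, hprelen]
    constructor
    · rintro ⟨j, htok, hkle, hsuf⟩
      have hj : (j:ℕ) < k := by have := j.isLt; omega
      have h1 : w[(j:ℕ)]? = some (some true) := by
        have : (w.take k)[(j:ℕ)]? = some ((w.take k).get j) :=
          List.getElem?_eq_getElem j.isLt
        rw [List.getElem?_take, if_pos (by omega)] at this
        rw [this, htok]
      have h2 : w[(j:ℕ)+n+1]? = some (some true) := by
        rw [List.getElem?_drop] at hsuf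
        rw [show (j:ℕ)+n+1 = k+(n+((j:ℕ)+1)-k) by omega]; exact hsuf
      obtain ⟨i, hip, hxi, hyi⟩ := (hpair (j:ℕ)).mp ⟨h1, h2⟩
      exact ⟨i, hxi, hyi, by omega, by omega⟩
    · rintro ⟨i, hxi, hyi, hik, hki⟩
      obtain ⟨h1, h2⟩ := (hpair (i:ℕ)).mpr ⟨i, rfl, hxi, hyi⟩
      refine ⟨⟨(i:ℕ), by omega⟩, ?_, show k ≤ n + ((i:ℕ)+1) by omega, ?_⟩
      · have : (w.take k)[(i:ℕ)]? = some ((w.take k).get ⟨(i:ℕ), by omega⟩) :=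
          List.getElem?_eq_getElem (by omega)
        rw [List.getElem?_take, if_pos (by omega), h1] at this
        exact (Option.some_injective _ this).symm
      · show (w.drop k)[n+((i:ℕ)+1)-k]? = some (some true)
        rw [List.getElem?_drop, show k+(n+((i:ℕ)+1)-k) = (i:ℕ)+n+1 by omega]
        exact h2
  -- G empty iff candidate set empty
  have hGe : G = ∅ ↔ ¬ ((disjBAPO n).cands (w.take k) (w.drop k)).Nonempty := by
    rcases Finset.eq_empty_or_nonempty ((disjBAPO n).cands (w.take k) (w.drop k)) with he | hne
    · rw [he] at hG
      simp [Finset.subset_empty.mp hG, he]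
    · have : G.card = 1 := by
        rw [hcard, min_eq_left (Finset.card_pos.mpr hne)]
      constructor
      · intro hGemp; rw [hGemp] at this; simp at this
      · intro hn; exact absurd hne hn
  -- finish
  show (disjBAPO n).h _ G _ k = _
  simp only [disjBAPO]
  rw [decide_eq_decide]
  constructor
  · rintro ⟨ha, hg, hc⟩ i ⟨hxi, hyi⟩
    rcases lt_or_ge (i:ℕ) k with hik | hik
    · rcases lt_or_ge ((i:ℕ)+n+1) k with h2 | h2
      · exact ha (by simp only [decide_eq_true_eq]; exact hA.mpr ⟨i, hxi, hyi, h2⟩)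
      · exact (hGe.mp hg) (hB.mpr ⟨i, hxi, hyi, hik, by omega⟩)
    · obtain ⟨m, hm, hs1, hs2⟩ := hC.mpr ⟨i, hxi, hyi, hik⟩
      exact hc m hm ⟨hs1, hs2⟩
  · intro hall
    refine ⟨?_, ?_, ?_⟩
    · simp only [ne_eq, decide_eq_true_eq]
      intro hEx
      obtain ⟨i, hxi, hyi, _⟩ := hA.mp hEx
      exact hall i ⟨hxi, hyi⟩
    · rw [hGe]
      intro hne
      obtain ⟨i, hxi, hyi, _, _⟩ := hB.mp hne
      exact hall i ⟨hxi, hyi⟩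
    · intro m hm ⟨hs1, hs2⟩
      obtain ⟨i, hxi, hyi, _⟩ := hC.mp ⟨m, hm, hs1, hs2⟩
      exact hall i ⟨hxi, hyi⟩
end

section
/- For every regular language L ⊆ Σ* whose minimal deterministic finite automaton has |Q| states (the state complexity of L), there exists a (⌈log₂ |Q|⌉, 0)-BAPO recognizing L, i.e., solving the problem p(x) = 1 if x ∈ L and p(x) = 0 otherwise. -/
open Finset Filter Asymptotics

/-- **Regular languages are BAPO-easy (parametrized by state complexity).**
Let `L` be a regular language over a finite alphabet whose minimal DFA has `Q`
states (i.e. some DFA with `Q` states accepts `L`, and no DFA with fewer states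
does). Then there is a `(⌈log₂ Q⌉, 0)`-BAPO recognizing `L`, i.e. solving the
problem `p(x) = 1` if `x ∈ L` and `p(x) = 0` otherwise. -/
theorem regular_has_log_states_BAPO {Sigma : Type} [Fintype Sigma]
    (L : Language Sigma) (Q : ℕ)
    (hQ : ∃ M : DFA Sigma (Fin Q), M.accepts = L)
    (hmin : ∀ q : ℕ, (∃ M : DFA Sigma (Fin q), M.accepts = L) → Q ≤ q) :
    ∃ M : BAPO Sigma Bool (Nat.clog 2 Q) 0,
      ∀ x : List Sigma,
        (x ∈ L → M.SolvesOn x true) ∧ (x ∉ L → M.SolvesOn x false) := by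
  classical
  obtain ⟨D, hD⟩ := hQ
  have hne : Nonempty (Fin Q) := ⟨D.start⟩
  have hcard : Fintype.card (Fin Q) ≤ Fintype.card (Fin (Nat.clog 2 Q) → Bool) := by
    simp only [Fintype.card_fin, Fintype.card_fun, Fintype.card_bool]
    exact Nat.le_pow_clog (by norm_num) Q
  obtain ⟨e⟩ := Function.Embedding.nonempty_of_card_le hcard
  set dec : (Fin (Nat.clog 2 Q) → Bool) → Fin Q := Function.invFun e with hdec
  have hinv : ∀ s, dec (e s) = s := fun s => Function.leftInverse_invFun e.injective s
  refine ⟨⟨fun pre => e (D.eval pre), fun _ _ _ _ => false,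
    fun bits _ suf _ => decide (D.evalFrom (dec bits) suf ∈ D.accept)⟩, fun x => ?_⟩
  have key : ∀ k, k < x.length → ∀ G : Finset (Sigma × ℕ),
      (decide (D.evalFrom (dec (e (D.eval (x.take k)))) (x.drop k) ∈ D.accept))
        = decide (x ∈ L) := by
    intro k _ G
    have : D.evalFrom (dec (e (D.eval (x.take k)))) (x.drop k) = D.eval x := by
      rw [hinv]
      have := D.evalFrom_of_append D.start (x.take k) (x.drop k)
      rw [List.take_append_drop] at this
      exact this.symm
    rw [this]
    congr 1
    rw [← hD]
    simp [DFA.mem_accepts]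
  constructor
  · intro hx k hk G _ _
    simpa [decide_eq_true_eq, hx] using key k hk G
  · intro hx k hk G _ _
    simpa [hx] using key k hk G
end

section
/- Fix an integer constant c ≥ 3 and functions a, b : ℕ → ℕ with a(m) = o(m^{1/c} · log m) and b(m) = o(m^{1−2/c}). Then for all sufficiently large p, writing n = p^c and m = p^c − p, there is no (a(m), b(m))-BAPO that solves Reachability on all instances consisting of the edge list of a directed graph with n nodes and m edges followed by a source and a target node. -/
open Finset Filter Asymptotics

/-- Directed `s`–`t` reachability in a graph given as an edge list. -/
def EdgeListReachable {n : ℕ} (edges : List (Fin n × Fin n)) (s t : Fin n) : Prop :=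
  Relation.ReflTransGen (fun u v => (u, v) ∈ edges) s t

/-
Put `u = a + 1` and build `2 ^ u` graphs, indexed by `w : Fin u → Bool`, in which row `r` of the
edge list always carries an edge leaving node `r`. Gadget `i` has source `i`, target `u + i` and a
pool row `pᵢ`, with edges `i → pᵢ` and `pᵢ → u + i` if `w i`, `pᵢ → i` otherwise, so the answer
to the query `(i, u + i)` is the bit `w i`. The prefix oracle has only `a` output bits, so two graphs that
differ at some gadget `i` receive the same prefix output when the split is right after the edge list.

The pool rows are placed only after a greedy choice of bait rows: every query `i` either attends to
at least `b` bait edges, which are the same in all graphs and fill its attention budget, or attends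
to no edge whatsoever on the unused rows, where the pool rows then go. Either way the suffix oracle
gets the same input on both graphs. The greedy baits at most `u * b` rows, so
`(a + 1) * (b + 3) ≤ m` suffices, and the growth conditions on `a` and `b` give this for large `p`.
-/

theorem Relation.ReflTransGen.mem_of_closed {α : Type*} {r : α → α → Prop} {S : Set α}
    (hS : ∀ x y, r x y → x ∈ S → y ∈ S) {a b : α} (h : Relation.ReflTransGen r a b)
    (ha : a ∈ S) : b ∈ S := by
  induction h with
  | refl => exact ha
  | tail _ hbc ih => exact hS _ _ hbc ih

namespace BAPO

variable {α Out : Type} {a b : ℕ}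

theorem mem_cands_ofFn (M : BAPO α Out a b) {m : ℕ} (tok : Fin m → α) (suf : List α)
    (t : α) (q : ℕ) :
    (t, q) ∈ M.cands (List.ofFn tok) suf ↔
      ∃ r : Fin m, tok r = t ∧ (r : ℕ) + 1 = q ∧ M.g suf m (tok r) (r + 1) = true := by
  classical
  simp only [cands, List.length_ofFn, mem_image, mem_filter, mem_univ, true_and,
    List.get_eq_getElem, List.getElem_ofFn, Prod.mk.injEq]
  constructor
  · rintro ⟨r, hg, rfl, rfl⟩
    exact ⟨Fin.cast (List.length_ofFn) r, rfl, rfl, hg⟩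
  · rintro ⟨r, rfl, rfl, hg⟩
    exact ⟨Fin.cast (List.length_ofFn).symm r, hg, rfl, rfl⟩

theorem cands_ofFn_congr (M : BAPO α Out a b) {m : ℕ} {tok tok' : Fin m → α} {suf : List α}
    (h : ∀ r, tok r ≠ tok' r →
      M.g suf m (tok r) (r + 1) = false ∧ M.g suf m (tok' r) (r + 1) = false) :
    M.cands (List.ofFn tok) suf = M.cands (List.ofFn tok') suf := by
  ext ⟨t, q⟩
  simp only [mem_cands_ofFn]
  refine exists_congr fun r => ?_
  by_cases hr : tok r = tok' r
  · rw [hr]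
  · simp [(h r hr).1, (h r hr).2]

theorem SolvesOn.h_eq {M : BAPO α Out a b} {pre suf : List α} {y : Out}
    {G : Finset (α × ℕ)} (h : M.SolvesOn (pre ++ suf) y) (hsuf : suf ≠ [])
    (hG : G ⊆ M.cands pre suf) (hcard : #G = min b #(M.cands pre suf)) :
    M.h (M.f pre) G suf pre.length = y := by
  have hlt : pre.length < (pre ++ suf).length := by
    simpa [List.length_append] using List.length_pos_iff.mpr hsuf
  simpa using h pre.length hlt G (by simpa using hG) (by simpa using hcard)

end BAPO

section Baiting

variable {ι α β : Type*} [Fintype ι] [DecidableEq α] (S : Finset α) (att : ι → α → β → Bool)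

theorem card_filter_update_of_eq_none {q : α → Option β → Bool} (hq : ∀ r, q r none = false)
    {bait : α → Option β} {r₀ : α} (hr₀ : r₀ ∈ S) (h : bait r₀ = none) (y : β) :
    #{r ∈ S | q r (Function.update bait r₀ (some y) r) = true} =
      #{r ∈ S | q r (bait r) = true} + if q r₀ (some y) then 1 else 0 := by
  rw [card_filter, card_filter, ← add_sum_erase S _ hr₀, ← add_sum_erase S _ hr₀,
    sum_congr rfl fun r hr => by rw [Function.update_of_ne (ne_of_mem_erase hr)]]
  simp [h, hq, add_comm]

def servedCount (bait : α → Option β) (i : ι) : ℕ := #{r ∈ S | (bait r).any (att i r)}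

def SaturatedOrBlind (B : ℕ) (bait : α → Option β) (i : ι) : Prop :=
  B ≤ servedCount S att bait i ∨ ∀ r ∈ S, bait r = none → ∀ y, att i r y = false

variable {S att}

theorem exists_bait_of_card_le (B : ℕ) (bait : α → Option β)
    (hS : ∀ r, (bait r).isSome → r ∈ S)
    (hcard : #{r ∈ S | (bait r).isSome} ≤ ∑ i, min B (servedCount S att bait i)) :
    ∃ bait' : α → Option β, (∀ r, (bait' r).isSome → r ∈ S) ∧
      #{r ∈ S | (bait' r).isSome} ≤ ∑ i, min B (servedCount S att bait' i) ∧
      ∀ i, SaturatedOrBlind S att B bait' i := by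
  classical
  by_cases hdone : ∀ i, SaturatedOrBlind S att B bait i
  · exact ⟨bait, hS, hcard, hdone⟩
  simp only [SaturatedOrBlind] at hdone
  push Not at hdone
  obtain ⟨i, hi, r₀, hr₀, hnone, y, hy⟩ := hdone
  rw [ne_eq, Bool.not_eq_false] at hy
  set bait' := Function.update bait r₀ (some y)
  have hserved (j : ι) : servedCount S att bait' j =
      servedCount S att bait j + if att j r₀ y then 1 else 0 :=
    card_filter_update_of_eq_none S (q := fun r o => o.any (att j r)) (fun _ => rfl) hr₀ hnone y
  have hbaited : #{r ∈ S | (bait' r).isSome} = #{r ∈ S | (bait r).isSome} + 1 := by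
    simpa using card_filter_update_of_eq_none S (q := fun _ o => o.isSome) (fun _ => rfl)
      hr₀ hnone y
  -- `i` was unsaturated and is served by the new bait row, so the invariant `hcard` survives
  have hgain : ∑ j, min B (servedCount S att bait j) + 1 ≤
      ∑ j, min B (servedCount S att bait' j) := by
    rw [← add_sum_erase _ _ (mem_univ i), ← add_sum_erase _ _ (mem_univ i), add_right_comm]
    gcongr with j
    · rw [hserved, if_pos hy]; omega
    · rw [hserved]; omega
  have hbound : ∑ j, min B (servedCount S att bait' j) ≤ Fintype.card ι * B := by
    simpa using sum_le_card_nsmul univ _ B fun j _ => min_le_left B (servedCount S att bait' j)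
  have hdecr : Fintype.card ι * B - #{r ∈ S | (bait' r).isSome} <
      Fintype.card ι * B - #{r ∈ S | (bait r).isSome} := by
    omega
  exact exists_bait_of_card_le B bait'
    (fun r hr => by
      by_cases h : r = r₀
      · exact h ▸ hr₀
      · exact hS r (by simpa [bait', Function.update_of_ne h] using hr))
    (by omega)
termination_by Fintype.card ι * B - #{r ∈ S | (bait r).isSome}
decreasing_by exact hdecr

theorem exists_bait (B : ℕ) :
    ∃ bait : α → Option β, (∀ r, (bait r).isSome → r ∈ S) ∧
      #{r ∈ S | (bait r).isSome} ≤ Fintype.card ι * B ∧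
      ∀ i, SaturatedOrBlind S att B bait i := by
  obtain ⟨bait, hS, hcard, hdone⟩ :=
    exists_bait_of_card_le (S := S) (att := att) B (fun _ => none) (by simp) (by simp)
  refine ⟨bait, hS, hcard.trans ?_, hdone⟩
  simpa using sum_le_card_nsmul univ _ B fun j _ => min_le_left B (servedCount S att bait j)

end Baiting

def BAPO.SolvesReachability {n a b : ℕ} (M : BAPO ((Fin n × Fin n) ⊕ Fin n) Bool a b)
    (m : ℕ) : Prop :=
  ∀ edges : List (Fin n × Fin n), edges.Nodup → edges.length = m → ∀ s t : Fin n,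
    (EdgeListReachable edges s t → M.SolvesOn (edges.map Sum.inl ++ [Sum.inr s, Sum.inr t]) true) ∧
    (¬ EdgeListReachable edges s t →
      M.SolvesOn (edges.map Sum.inl ++ [Sum.inr s, Sum.inr t]) false)

/-- Row `r` of the edge list carries the edge `r → next r`. Gadget `i < u` has source `i`, target
`u + i` and pool row `pool i`; `bait r = some y` puts the edge `r → target y` on row `r`. Pool and
bait rows lie in `[2u, m)`, away from sources and targets. -/
structure Layout (u m : ℕ) where
  pool : Fin u → ℕ
  bait : ℕ → Option (Fin u × Bool)
  pool_injective : Function.Injective pool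
  pool_mem : ∀ i, pool i ∈ Ico (2 * u) m
  bait_pool : ∀ i, bait (pool i) = none
  mem_of_isSome_bait : ∀ r, (bait r).isSome → r ∈ Ico (2 * u) m

namespace Layout

open Fin.NatCast

variable {u m : ℕ} (L : Layout u m) (w w' : Fin u → Bool)

theorem exists_bait_eq (bait : ℕ → Option (Fin u × Bool))
    (hbait : ∀ r, (bait r).isSome → r ∈ Ico (2 * u) m)
    (hcard : #{r ∈ Ico (2 * u) m | (bait r).isSome} + 3 * u ≤ m) :
    ∃ L : Layout u m, L.bait = bait := by
  have hfree : u ≤ #{r ∈ Ico (2 * u) m | bait r = none} := by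
    have hsplit := card_filter_add_card_filter_not (s := Ico (2 * u) m) fun r => (bait r).isSome
    simp only [Bool.not_eq_true, Option.isSome_eq_false_iff, Option.isNone_iff_eq_none,
      Nat.card_Ico] at hsplit
    omega
  obtain ⟨pool⟩ := Function.Embedding.nonempty_of_card_le (α := Fin u)
    (β := ({r ∈ Ico (2 * u) m | bait r = none} : Finset ℕ)) (by simpa using hfree)
  exact ⟨{ pool := fun i => pool i
           bait := bait
           pool_injective := Subtype.val_injective.comp pool.injective
           pool_mem := fun i => (mem_filter.mp (pool i).2).1
           bait_pool := fun i => (mem_filter.mp (pool i).2).2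
           mem_of_isSome_bait := hbait }, rfl⟩

def target (y : Fin u × Bool) : ℕ := if y.2 then u + y.1 else y.1

theorem target_lt (y : Fin u × Bool) : target y < 2 * u := by
  unfold target; split <;> omega

noncomputable def label : ℕ → Option (Fin u × Bool) :=
  Function.extend L.pool (fun i => some (i, w i)) L.bait

noncomputable def next (r : ℕ) : ℕ :=
  if h : r < u then L.pool ⟨r, h⟩ else (L.label w r).elim r target

theorem label_pool (i : Fin u) : L.label w (L.pool i) = some (i, w i) :=
  L.pool_injective.extend_apply _ _ i

theorem label_of_forall_ne {r : ℕ} (hr : ∀ i, L.pool i ≠ r) : L.label w r = L.bait r :=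
  Function.extend_apply' _ _ r fun ⟨i, hi⟩ => hr i hi

theorem next_of_lt (i : Fin u) : L.next w i = L.pool i := by
  simp [next]

theorem next_pool (i : Fin u) : L.next w (L.pool i) = target (i, w i) := by
  have := L.pool_mem i
  simp only [mem_Ico] at this
  rw [next, dif_neg (by omega), label_pool]
  rfl

theorem next_of_bait_eq_some {r : ℕ} {y : Fin u × Bool} (h : L.bait r = some y) :
    L.next w r = target y := by
  have hr := L.mem_of_isSome_bait r (by simp [h])
  simp only [mem_Ico] at hr
  have hne : ∀ i, L.pool i ≠ r := fun i hi => by simp [← hi, L.bait_pool] at h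
  rw [next, dif_neg (by omega), L.label_of_forall_ne w hne, h]
  rfl

theorem next_congr {r : ℕ} (hr : ∀ i, L.pool i ≠ r) : L.next w r = L.next w' r := by
  simp only [next, L.label_of_forall_ne _ hr]

theorem next_lt {r : ℕ} (hr : r < m) : L.next w r < m := by
  unfold next
  split
  · exact (mem_Ico.mp (L.pool_mem _)).2
  · cases hl : L.label w r with
    | none => exact hr
    | some y =>
      have hpool := mem_Ico.mp (L.pool_mem y.1)
      have htarget := target_lt y
      simp only [Option.elim]
      omega

section Graph

variable (n : ℕ) [NeZero n]

noncomputable def edges : List (Fin n × Fin n) :=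
  List.ofFn fun r : Fin m => ((r : ℕ), (L.next w r : ℕ))

def query (i : Fin u) : List ((Fin n × Fin n) ⊕ Fin n) :=
  [Sum.inr ((i : ℕ) : Fin n), Sum.inr ((u + i : ℕ) : Fin n)]

variable {n}

theorem length_edges : (L.edges w n).length = m := List.length_ofFn

theorem mem_edges {x y : Fin n} :
    (x, y) ∈ L.edges w n ↔ ∃ r : Fin m, ((r : ℕ) : Fin n) = x ∧ ((L.next w r : ℕ) : Fin n) = y := by
  simp [edges, List.mem_ofFn]

theorem nodup_edges (hmn : m ≤ n) : (L.edges w n).Nodup := by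
  refine List.nodup_ofFn.mpr fun r s h => Fin.ext ?_
  have := congrArg (fun e => (e.1 : ℕ)) h
  simpa [Fin.val_cast_of_lt (r.2.trans_le hmn), Fin.val_cast_of_lt (s.2.trans_le hmn)] using this

theorem reachable_of_eq_true {i : Fin u} (hw : w i = true) :
    EdgeListReachable (L.edges w n) ((i : ℕ) : Fin n) ((u + i : ℕ) : Fin n) := by
  have hpool := mem_Ico.mp (L.pool_mem i)
  have hstart : (((i : ℕ) : Fin n), ((L.pool i : ℕ) : Fin n)) ∈ L.edges w n :=
    (L.mem_edges w).mpr ⟨⟨i, by omega⟩, rfl, by rw [L.next_of_lt]⟩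
  have hfinish : (((L.pool i : ℕ) : Fin n), ((u + i : ℕ) : Fin n)) ∈ L.edges w n :=
    (L.mem_edges w).mpr ⟨⟨L.pool i, hpool.2⟩, rfl, by simp [L.next_pool, target, hw]⟩
  exact .head hstart (.single hfinish)

theorem not_reachable_of_eq_false (hmn : m ≤ n) {i : Fin u} (hw : w i = false) :
    ¬ EdgeListReachable (L.edges w n) ((i : ℕ) : Fin n) ((u + i : ℕ) : Fin n) := by
  have hpool := mem_Ico.mp (L.pool_mem i)
  have hval {k : ℕ} (hk : k < m) : ((k : Fin n) : ℕ) = k := Fin.val_cast_of_lt (by omega)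
  -- without the edge `pool i → u + i`, the walk from `i` is trapped in the cycle `i ⇄ pool i`
  have hclosed : ∀ x y, (x, y) ∈ L.edges w n →
      x ∈ {v : Fin n | (v : ℕ) = i ∨ (v : ℕ) = L.pool i} →
      y ∈ {v : Fin n | (v : ℕ) = i ∨ (v : ℕ) = L.pool i} := by
    rintro x y hxy hx
    obtain ⟨r, rfl, rfl⟩ := (L.mem_edges w).mp hxy
    simp only [Set.mem_ofPred_eq, hval r.2, hval (L.next_lt w r.2)] at hx ⊢
    rcases hx with hr | hr
    · rw [hr, L.next_of_lt]; exact .inr rfl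
    · rw [hr, L.next_pool]; simp [target, hw]
  intro h
  have := h.mem_of_closed hclosed (by simp [hval (show (i : ℕ) < m by omega)])
  simp only [Set.mem_ofPred_eq, hval (show u + i < m by omega)] at this
  omega

end Graph

section Attention

variable {n a b : ℕ} [NeZero n] (M : BAPO ((Fin n × Fin n) ⊕ Fin n) Bool a b)

def attends (m : ℕ) (i : Fin u) (r : ℕ) (y : Fin u × Bool) : Bool :=
  M.g (query n i) m (Sum.inl ((r : Fin n), (target y : Fin n))) (r + 1)

theorem map_inl_edges (w : Fin u → Bool) :
    (L.edges w n).map (Sum.inl (β := Fin n)) =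
      List.ofFn fun r : Fin m => Sum.inl (((r : ℕ) : Fin n), ((L.next w r : ℕ) : Fin n)) := by
  rw [edges, List.map_ofFn]
  rfl

theorem exists_subset_cands_forall (i : Fin u)
    (h : b ≤ servedCount (Ico (2 * u) m) (attends M m) L.bait i) :
    ∃ G, #G = b ∧ ∀ w, G ⊆ M.cands ((L.edges w n).map Sum.inl) (query n i) := by
  obtain ⟨R, hR, hRcard⟩ := exists_subset_card_eq h
  refine ⟨R.image fun r : ℕ =>
    ((Sum.inl ((r : Fin n), (((L.bait r).elim r target : ℕ) : Fin n)) : (Fin n × Fin n) ⊕ Fin n),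
      r + 1),
    ?_, fun w => ?_⟩
  · rw [card_image_of_injective _ fun r s h => by simpa using congrArg Prod.snd h, hRcard]
  intro g hg
  obtain ⟨r, hr, rfl⟩ := mem_image.mp hg
  obtain ⟨hrS, hatt⟩ := mem_filter.mp (hR hr)
  obtain ⟨y, hy⟩ := Option.isSome_iff_exists.mp (Option.isSome_of_any hatt)
  rw [map_inl_edges, BAPO.mem_cands_ofFn]
  refine ⟨⟨r, (mem_Ico.mp hrS).2⟩, ?_, rfl, ?_⟩
  · simp [L.next_of_bait_eq_some w hy, hy]
  · simpa [L.next_of_bait_eq_some w hy, hy, attends] using hatt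

theorem cands_eq_of_forall_attends_eq_false (i : Fin u)
    (h : ∀ r ∈ Ico (2 * u) m, L.bait r = none → ∀ y, attends M m i r y = false)
    (w w' : Fin u → Bool) :
    M.cands ((L.edges w n).map Sum.inl) (query n i) =
      M.cands ((L.edges w' n).map Sum.inl) (query n i) := by
  rw [map_inl_edges, map_inl_edges]
  refine M.cands_ofFn_congr fun r hne => ?_
  obtain ⟨j, hj⟩ : ∃ j, L.pool j = r := by
    by_contra! hr
    exact hne (by rw [L.next_congr w w' hr])
  have hpool (v : Fin u → Bool) := h _ (L.pool_mem j) (L.bait_pool j) (j, v j)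
  simp only [← hj, L.next_pool]
  exact ⟨hpool w, hpool w'⟩

theorem exists_common_attended {i : Fin u}
    (hi : SaturatedOrBlind (Ico (2 * u) m) (attends M m) b L.bait i) (w w' : Fin u → Bool) :
    ∃ G, G ⊆ M.cands ((L.edges w n).map Sum.inl) (query n i) ∧
      G ⊆ M.cands ((L.edges w' n).map Sum.inl) (query n i) ∧
      #G = min b #(M.cands ((L.edges w n).map Sum.inl) (query n i)) ∧
      #G = min b #(M.cands ((L.edges w' n).map Sum.inl) (query n i)) := by
  rcases hi with hsaturated | hblind
  · obtain ⟨G, hGcard, hG⟩ := L.exists_subset_cands_forall M i hsaturated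
    exact ⟨G, hG w, hG w', by simpa [hGcard] using card_le_card (hG w),
      by simpa [hGcard] using card_le_card (hG w')⟩
  · rw [← L.cands_eq_of_forall_attends_eq_false M i hblind w w']
    obtain ⟨G, hG, hcard⟩ := exists_subset_card_eq (min_le_right b
      #(M.cands ((L.edges w n).map Sum.inl) (query n i)))
    exact ⟨G, hG, hG, hcard, hcard⟩

end Attention

section Separation

variable {n a b : ℕ} [NeZero n] {M : BAPO ((Fin n × Fin n) ⊕ Fin n) Bool a b}

theorem prefixOracle_ne (hmn : m ≤ n) (hM : M.SolvesReachability m) {i : Fin u}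
    (hi : SaturatedOrBlind (Ico (2 * u) m) (attends M m) b L.bait i)
    {w w' : Fin u → Bool} (hw : w i = true) (hw' : w' i = false) :
    M.f ((L.edges w n).map Sum.inl) ≠ M.f ((L.edges w' n).map Sum.inl) := by
  intro hf
  obtain ⟨G, hG, hG', hcard, hcard'⟩ := L.exists_common_attended M hi w w'
  have htrue := ((hM _ (L.nodup_edges w hmn) (L.length_edges w) _ _).1
    (L.reachable_of_eq_true w hw)).h_eq (List.cons_ne_nil _ _) hG hcard
  have hfalse := ((hM _ (L.nodup_edges w' hmn) (L.length_edges w') _ _).2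
    (L.not_reachable_of_eq_false w' hmn hw')).h_eq (List.cons_ne_nil _ _) hG' hcard'
  simp only [List.length_map, length_edges, hf] at htrue hfalse
  exact absurd (htrue.symm.trans hfalse) (by decide)

theorem injective_prefixOracle (hmn : m ≤ n) (hM : M.SolvesReachability m)
    (hL : ∀ i, SaturatedOrBlind (Ico (2 * u) m) (attends M m) b L.bait i) :
    Function.Injective fun w : Fin u → Bool => M.f ((L.edges w n).map Sum.inl) := by
  intro w w' hf
  by_contra hne
  obtain ⟨i, hi⟩ := Function.ne_iff.mp hne
  cases hw : w i <;> cases hw' : w' i <;> simp only [hw, hw', ne_eq, not_true_eq_false] at hi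
  · exact L.prefixOracle_ne hmn hM (hL i) hw' hw hf.symm
  · exact L.prefixOracle_ne hmn hM (hL i) hw hw' hf

end Separation

end Layout

theorem BAPO.not_solvesReachability {n m a b : ℕ} (hmn : m ≤ n) (hm : (a + 1) * (b + 3) ≤ m)
    (M : BAPO ((Fin n × Fin n) ⊕ Fin n) Bool a b) : ¬ M.SolvesReachability m := by
  intro hM
  have : NeZero n := ⟨by nlinarith⟩
  generalize hu : a + 1 = u at hm
  obtain ⟨bait, hbait, hbaited, hserved⟩ :=
    exists_bait (S := Ico (2 * u) m) (att := Layout.attends (u := u) M m) b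
  rw [Fintype.card_fin] at hbaited
  obtain ⟨L, rfl⟩ := Layout.exists_bait_eq bait hbait (by nlinarith)
  have := Fintype.card_le_of_injective _ (L.injective_prefixOracle hmn hM hserved)
  simp [← hu, pow_succ] at this

theorem eventually_mul_le_of_isLittleO {a b : ℕ → ℕ} {f g : ℕ → ℝ}
    (ha : (fun m => (a m : ℝ)) =o[atTop] f) (hb : (fun m => (b m : ℝ)) =o[atTop] g)
    (hf : Tendsto f atTop atTop) (hg : Tendsto g atTop atTop)
    (hfg : (fun m => f m * g m) =O[atTop] fun m => (m : ℝ)) (k l : ℕ) :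
    ∀ᶠ m in atTop, (a m + k) * (b m + l) ≤ m := by
  have hak : (fun m => (a m : ℝ) + k) =o[atTop] f :=
    ha.add (isLittleO_const_left.mpr (.inr (tendsto_norm_atTop_atTop.comp hf)))
  have hbl : (fun m => (b m : ℝ) + l) =o[atTop] g :=
    hb.add (isLittleO_const_left.mpr (.inr (tendsto_norm_atTop_atTop.comp hg)))
  filter_upwards [((hak.mul hbl).trans_isBigO hfg).eventuallyLE] with m hm
  rw [Real.norm_of_nonneg (by positivity), Real.norm_of_nonneg (by positivity)] at hm
  exact_mod_cast hm

theorem isBigO_rpow_mul_log_mul_rpow {c : ℝ} (hc : 0 < c) :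
    (fun x : ℝ => x ^ (1 / c) * Real.log x * x ^ (1 - 2 / c)) =O[atTop] fun x => x := by
  have hlog := (isLittleO_log_rpow_atTop (one_div_pos.mpr hc)).isBigO.mul
    (isBigO_refl (fun x : ℝ => x ^ (1 / c) * x ^ (1 - 2 / c)) atTop)
  refine hlog.congr' ?_ ?_
  · filter_upwards with x
    ring
  · filter_upwards [eventually_gt_atTop 0] with x hx
    rw [← Real.rpow_add hx, ← Real.rpow_add hx]
    ring_nf
    exact Real.rpow_one x

theorem tendsto_pow_sub_self_atTop {c : ℕ} (hc : 2 ≤ c) :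
    Tendsto (fun p : ℕ => p ^ c - p) atTop atTop := by
  refine tendsto_atTop_mono (fun p => ?_) (tendsto_sub_atTop_nat 1)
  rcases p with _ | p
  · simp
  have hsq : (p + 1) ^ 2 ≤ (p + 1) ^ c := Nat.pow_le_pow_right p.succ_pos hc
  have hexpand : (p + 1) ^ 2 = p * p + 2 * p + 1 := by ring
  omega

/-- **Reachability is BAPO-hard.** Fix an integer constant `c ≥ 3` and functions
`a, b : ℕ → ℕ` with `a(m) = o(m^{1/c} log m)` and `b(m) = o(m^{1 - 2/c})`. Then for
all sufficiently large `p`, writing `n = p^c` and `m = p^c - p`, there is no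
`(a(m), b(m))`-BAPO solving `Reachability` on all instances consisting of the edge
list of a directed graph with `n` nodes and `m` edges followed by a source and a
target node. Tokens are either edges `Sum.inl (i, j)` or nodes `Sum.inr i`. -/
theorem reachability_hard (c : ℕ) (hc : 3 ≤ c) (a b : ℕ → ℕ)
    (ha : (fun m : ℕ => (a m : ℝ)) =o[atTop]
      fun m : ℕ => (m : ℝ) ^ ((1 : ℝ) / (c : ℝ)) * Real.log m)
    (hb : (fun m : ℕ => (b m : ℝ)) =o[atTop]
      fun m : ℕ => (m : ℝ) ^ (1 - 2 / (c : ℝ))) :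
    ∀ᶠ p in atTop,
      ¬ ∃ M : BAPO ((Fin (p ^ c) × Fin (p ^ c)) ⊕ Fin (p ^ c)) Bool
            (a (p ^ c - p)) (b (p ^ c - p)),
        ∀ edges : List (Fin (p ^ c) × Fin (p ^ c)),
          edges.Nodup → edges.length = p ^ c - p →
          ∀ s t : Fin (p ^ c),
            (EdgeListReachable edges s t →
              M.SolvesOn (edges.map Sum.inl ++ [Sum.inr s, Sum.inr t]) true) ∧
            (¬ EdgeListReachable edges s t →
              M.SolvesOn (edges.map Sum.inl ++ [Sum.inr s, Sum.inr t]) false) := by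
  have hc₀ : (0 : ℝ) < c := by positivity
  have hexp : (0 : ℝ) < 1 - 2 / c := by
    rw [sub_pos, div_lt_one hc₀]; exact_mod_cast hc
  have hf : Tendsto (fun m : ℕ => (m : ℝ) ^ ((1 : ℝ) / c) * Real.log m) atTop atTop :=
    ((tendsto_rpow_atTop (by positivity)).atTop_mul_atTop₀ Real.tendsto_log_atTop).comp
      tendsto_natCast_atTop_atTop
  have hg : Tendsto (fun m : ℕ => (m : ℝ) ^ (1 - 2 / (c : ℝ))) atTop atTop :=
    (tendsto_rpow_atTop hexp).comp tendsto_natCast_atTop_atTop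
  have hfg := (isBigO_rpow_mul_log_mul_rpow hc₀).comp_tendsto tendsto_natCast_atTop_atTop
  filter_upwards [(tendsto_pow_sub_self_atTop (c := c) (by omega)).eventually
    (eventually_mul_le_of_isLittleO ha hb hf hg hfg 1 3)] with p hp
  rintro ⟨M, hM⟩
  exact M.not_solvesReachability (Nat.sub_le _ _) hp hM
end

section
/- For every function a : ℕ → ℕ with 1 ≤ a(n) for all n and a(n) = o(n), and for every n with a(n) ≤ n, there exists a (⌈log₂ a(n)⌉, n − a(n))-BAPO solving Majority on all inputs of length n. -/
open Finset Filter Asymptotics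

/-! The attention function selects exactly the prefix positions holding a one. If the prefix
has fewer than `b` ones the suffix oracle sees all of them; otherwise it sees exactly `b`, and
the prefix oracle supplies the excess, which is below `2 ^ m` as soon as the input has length at
most `b + 2 ^ m`. Knowing the numbers of ones and zeros of the prefix, the suffix oracle can
evaluate any function of the numbers of zeros and ones of the input, in particular Majority.
With `m = ⌈log₂ a⌉` and `b = n - a` we have `n ≤ b + 2 ^ m`. -/

def bitsEquivFin (m : ℕ) : (Fin m → Bool) ≃ Fin (2 ^ m) :=
  (Equiv.arrowCongr (Equiv.refl _) finTwoEquiv.symm).trans finFunctionFinEquiv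

namespace BAPO

theorem card_cands_eq_count_true {Out : Type} {a b : ℕ} (M : BAPO Bool Out a b)
    (hg : M.g = fun _ _ tok _ => tok) (pre suf : List Bool) :
    (M.cands pre suf).card = pre.count true := by
  rw [cands, hg, Subsingleton.elim (Classical.decEq Bool) instDecidableEqBool,
    card_image_of_injective _ fun i j hij => Fin.ext (by simpa using congrArg Prod.snd hij)]
  exact Fin.card_filter_univ_eq_vector_get_eq_count true ⟨pre, rfl⟩

def encodeExcess (m b t : ℕ) : Fin m → Bool :=
  (bitsEquivFin m).symm ⟨(t - b) % 2 ^ m, Nat.mod_lt _ (Nat.two_pow_pos m)⟩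

def decodeCount (m b : ℕ) (bits : Fin m → Bool) (attended : ℕ) : ℕ :=
  if attended < b then attended else b + bitsEquivFin m bits

theorem decodeCount_encodeExcess {m b t : ℕ} (ht : t < b + 2 ^ m) :
    decodeCount m b (encodeExcess m b t) (min b t) = t := by
  unfold decodeCount encodeExcess
  split_ifs with h
  · omega
  · simp only [Equiv.apply_symm_apply, Nat.mod_eq_of_lt (show t - b < 2 ^ m by omega)]
    omega

def counting {Out : Type} (m b : ℕ) (p : ℕ → ℕ → Out) : BAPO Bool Out m b where
  f pre := encodeExcess m b (pre.count true)
  g _ _ tok _ := tok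
  h bits G suf k :=
    let t := decodeCount m b bits G.card
    p (k - t + suf.count false) (t + suf.count true)

theorem counting_solvesOn {Out : Type} {m b : ℕ} (p : ℕ → ℕ → Out) {x : List Bool}
    (hx : x.length ≤ b + 2 ^ m) :
    (counting m b p).SolvesOn x (p (x.count false) (x.count true)) := by
  intro k hk G _ hcard
  rw [card_cands_eq_count_true _ rfl] at hcard
  have hlen : (x.take k).length = k := List.length_take_of_le hk.le
  have hcount : (x.take k).count true < b + 2 ^ m := by
    have := (x.take k).count_le_length (a := true)
    omega
  have hprefix := List.count_false_add_count_true (x.take k)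
  simp only [counting, hcard, decodeCount_encodeExcess hcount]
  rw [← x.take_append_drop k, List.count_append, List.count_append, List.take_append_drop]
  congr 1
  omega

end BAPO

theorem majority_tradeoff_general (a : ℕ → ℕ) (n : ℕ) :
    ∃ M : BAPO Bool Bool (Nat.clog 2 (a n)) (n - a n),
      ∀ x : List Bool, x.length = n →
        M.SolvesOn x (decide (x.count false < x.count true)) := by
  refine ⟨BAPO.counting _ _ fun zeros ones => decide (zeros < ones), fun x hx => ?_⟩
  apply BAPO.counting_solvesOn
  have := Nat.le_pow_clog one_lt_two (a n)
  omega

/-- **Majority prefix/attention trade-off.** For every function `a : ℕ → ℕ` with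
`1 ≤ a(n)` for all `n` and `a(n) = o(n)`, and for every `n` with `a(n) ≤ n`, there
exists a `(⌈log₂ a(n)⌉, n - a(n))`-BAPO solving `Majority` on all inputs of
length `n`. -/
theorem majority_tradeoff (a : ℕ → ℕ) (ha1 : ∀ n, 1 ≤ a n)
    (hao : (fun n : ℕ => (a n : ℝ)) =o[atTop] fun n : ℕ => (n : ℝ))
    (n : ℕ) (han : a n ≤ n) :
    ∃ M : BAPO Bool Bool (Nat.clog 2 (a n)) (n - a n),
      ∀ x : List Bool, x.length = n →
        M.SolvesOn x (decide (x.count false < x.count true)) :=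
  majority_tradeoff_general a n
end

section
/- Fix ε ∈ (0,1) and functions a, b : ℕ → ℕ with a(n) = o(log n) and b(n) = O(n^{1−ε}). Then for all sufficiently large n there is no (a(n), b(n))-BAPO that solves Median on all inputs of length n, and no (a(n), b(n))-BAPO that solves Mode on all inputs of length n; in particular, on {0,1}-valued inputs both the median and the mode equal 1 exactly when the input has a strict majority of ones. -/
open Finset Filter Asymptotics

/-!
Only `{0,1}`-inputs are used, on which both Median and Mode compute the majority bit. Split
an input of length `n` after its first `k = ⌊n/2⌋` tokens and put `A = 2^a`. We build prefixes
`W 0, …, W A`, where `W i` has `A·b + i` ones, and for `j < A` take the suffix with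
`k - A·b - j` ones followed by zeros. The prefixes differ only on a block of `A` positions,
chosen outside every small set of positions that the attention function may attend to under one
of these suffixes; for each suffix with a large such set, Hall's theorem reserves `b` attended
positions, frozen to the same bits in all prefixes. So for every suffix all prefixes admit a
common attended set. By pigeonhole, two prefixes `W i`, `W j` with `i < j` get the same `a`
bits from the prefix oracle; after suffix `i` the suffix oracle sees the same data on both
inputs, but the first input has exactly `k` ones, no strict majority, and the second has more
than `n / 2`. All this needs only `A (A + 1) (b + 1) ≤ k`, true for large `n` since
`2^a = n^{o(1)}` and `b = O(n^{1-ε})`.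
-/

theorem exists_injective_mem_of_card_le {ι β : Type*} [Fintype ι] [DecidableEq β]
    (t : ι → Finset β) (ht : ∀ i, Fintype.card ι ≤ #(t i)) :
    ∃ f : ι → β, Function.Injective f ∧ ∀ i, f i ∈ t i := by
  refine (all_card_le_biUnion_card_iff_exists_injective t).mp fun s => ?_
  rcases s.eq_empty_or_nonempty with rfl | ⟨i, hi⟩
  · simp
  · exact (card_le_univ s).trans ((ht i).trans (card_le_card (subset_biUnion_of_mem t hi)))

theorem exists_lt_le_card_map_eq {β : Type*} [Fintype β] (f : ℕ → β) :
    ∃ i j, i < j ∧ j ≤ Fintype.card β ∧ f i = f j := by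
  obtain ⟨x, y, hxy, hf⟩ :=
    Fintype.exists_ne_map_eq_of_card_lt (fun i : Fin (Fintype.card β + 1) => f i) (by simp)
  rcases lt_or_gt_of_ne (Fin.val_ne_of_ne hxy) with h | h
  · exact ⟨x, y, h, Nat.lt_succ_iff.mp y.2, hf⟩
  · exact ⟨y, x, h, Nat.lt_succ_iff.mp x.2, hf.symm⟩

section Attention

variable {α : Type*} [Fintype α] [DecidableEq α]

def attendedBy (att : α → Bool → Bool) (W : Finset α) : Finset α :=
  {q | att q (decide (q ∈ W))}

def attendable (att : α → Bool → Bool) : Finset α :=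
  {q | att q false ∨ att q true}

theorem attendedBy_subset_attendable (att : α → Bool → Bool) (W : Finset α) :
    attendedBy att W ⊆ attendable att := by
  intro q hq
  simp only [attendedBy, attendable, mem_filter, mem_univ, true_and] at hq ⊢
  cases h : decide (q ∈ W) <;> simp_all

theorem attendedBy_congr {att : α → Bool → Bool} {W W' : Finset α}
    (h : ∀ q ∈ attendable att, q ∈ W ↔ q ∈ W') : attendedBy att W = attendedBy att W' := by
  ext q
  by_cases hq : q ∈ attendable att
  · simp [attendedBy, h q hq]
  · exact iff_of_false (fun h' => hq (attendedBy_subset_attendable _ _ h'))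
      (fun h' => hq (attendedBy_subset_attendable _ _ h'))

theorem exists_block_disjoint_small_attendable (att : ℕ → α → Bool → Bool) (A θ : ℕ)
    (h : A + A * θ ≤ Fintype.card α) :
    ∃ B : Finset α, #B = A ∧
      ∀ j < A, #(attendable (att j)) < θ → Disjoint B (attendable (att j)) := by
  set L := {j ∈ range A | #(attendable (att j)) < θ}.biUnion fun j => attendable (att j)
  have hL : #L ≤ A * θ :=
    calc #L ≤ ∑ j ∈ {j ∈ range A | #(attendable (att j)) < θ}, #(attendable (att j)) :=
          card_biUnion_le
      _ ≤ #{j ∈ range A | #(attendable (att j)) < θ} * θ :=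
          sum_le_card_nsmul _ _ _ fun j hj => (mem_filter.mp hj).2.le
      _ ≤ A * θ := Nat.mul_le_mul_right θ ((card_filter_le _ _).trans (card_range A).le)
  obtain ⟨B, hBL, hB⟩ := exists_subset_card_eq (show A ≤ #(univ \ L) by
    rw [card_sdiff_of_subset (subset_univ L), card_univ]; omega)
  refine ⟨B, hB, fun j hj hlight => disjoint_left.mpr fun q hqB hq => ?_⟩
  exact (mem_sdiff.mp (hBL hqB)).2
    (mem_biUnion.mpr ⟨j, mem_filter.mpr ⟨mem_range.mpr hj, hlight⟩, hq⟩)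

theorem exists_frozen_attended (att : ℕ → α → Bool → Bool) (A b : ℕ) (B : Finset α)
    (hB : #B ≤ A) :
    ∃ D O : Finset α, O ⊆ D ∧ #D ≤ A * b ∧ Disjoint D B ∧
      ∀ j < A, A * b + A ≤ #(attendable (att j)) →
        ∃ R ⊆ D, #R = b ∧ ∀ W, W ∩ D = O → R ⊆ attendedBy (att j) W := by
  set H := {j ∈ range A | A * b + A ≤ #(attendable (att j))}
  have hι : Fintype.card (H × Fin b) ≤ A * b := by
    simpa using Nat.mul_le_mul_right b ((card_filter_le _ _).trans (card_range A).le)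
  obtain ⟨f, hf, hft⟩ := exists_injective_mem_of_card_le
    (fun x : H × Fin b => attendable (att x.1) \ B) fun x => by
      have := (mem_filter.mp x.1.2).2
      have := le_card_sdiff B (attendable (att x.1))
      omega
  set O := ({x | att x.1 (f x) true} : Finset (H × Fin b)).image f
  refine ⟨univ.image f, O, image_subset_image (subset_univ _), card_image_le.trans hι,
    disjoint_left.mpr fun q hq hqB => ?_, fun j hj hheavy => ?_⟩
  · obtain ⟨x, -, rfl⟩ := mem_image.mp hq
    exact (mem_sdiff.mp (hft x)).2 hqB
  let jH : H := ⟨j, mem_filter.mpr ⟨mem_range.mpr hj, hheavy⟩⟩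
  refine ⟨univ.image fun r => f (jH, r), fun q hq => ?_, ?_, fun W hW q hq => ?_⟩
  · obtain ⟨r, -, rfl⟩ := mem_image.mp hq
    exact mem_image_of_mem f (mem_univ _)
  · rw [card_image_of_injective _ fun r s h => (Prod.ext_iff.mp (hf h)).2, card_univ,
      Fintype.card_fin]
  · obtain ⟨r, -, rfl⟩ := mem_image.mp hq
    have hD : f (jH, r) ∈ univ.image f := mem_image_of_mem f (mem_univ _)
    have hmem : f (jH, r) ∈ W ↔ att j (f (jH, r)) true := by
      rw [← and_iff_left (a := f (jH, r) ∈ W) hD, ← mem_inter, hW, mem_image]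
      simp only [mem_filter, mem_univ, true_and]
      exact ⟨fun ⟨x, hx, hfx⟩ => by rwa [hf hfx] at hx, fun h => ⟨_, h, rfl⟩⟩
    have hatt : f (jH, r) ∈ attendable (att j) := (mem_sdiff.mp (hft (jH, r))).1
    simp only [attendable, mem_filter, mem_univ, true_and] at hatt
    simp only [attendedBy, mem_filter, mem_univ, true_and]
    by_cases h : att j (f (jH, r)) true <;> simp_all

theorem exists_inter_eq_card_eq {D O B : Finset α} (hOD : O ⊆ D) (hDB : Disjoint D B) {c : ℕ}
    (hOc : #O ≤ c) (hc : c + #D + #B ≤ Fintype.card α) :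
    ∃ X : Finset α, X ∩ D = O ∧ Disjoint X B ∧ #X = c := by
  obtain ⟨P, hP, hPc⟩ := exists_subset_card_eq (show c - #O ≤ #(univ \ (D ∪ B)) by
    rw [card_sdiff_of_subset (subset_univ _), card_univ]
    have := card_union_le D B
    omega)
  have hPD : Disjoint P (D ∪ B) := disjoint_of_subset_left hP sdiff_disjoint
  have hOP : Disjoint O P :=
    disjoint_of_subset_left (hOD.trans subset_union_left) hPD.symm
  refine ⟨O ∪ P, ?_, ?_, ?_⟩
  · rw [union_inter_distrib_right, inter_eq_left.mpr hOD,
      disjoint_iff_inter_eq_empty.mp (disjoint_of_subset_right subset_union_left hPD), union_empty]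
  · exact disjoint_union_left.mpr ⟨disjoint_of_subset_left hOD hDB,
      disjoint_of_subset_right subset_union_right hPD⟩
  · rw [card_union_of_disjoint hOP]
    omega

theorem exists_prefixes_with_common_attention (att : ℕ → α → Bool → Bool) (A b : ℕ)
    (h : A * (A + 1) * (b + 1) ≤ Fintype.card α) :
    ∃ W : ℕ → Finset α, (∀ i ≤ A, #(W i) = A * b + i) ∧
      ∀ j < A, ∃ R : Finset α, ∀ i, R ⊆ attendedBy (att j) (W i) ∧
        #R = min b #(attendedBy (att j) (W i)) ∧ ∀ q ∈ R, (q ∈ W i ↔ q ∈ W 0) := by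
  have hAb : A * b ≤ A * A * b := Nat.mul_le_mul_right b (Nat.le_mul_self A)
  obtain ⟨B, hB, hlight⟩ :=
    exists_block_disjoint_small_attendable att A (A * b + A) (by nlinarith)
  obtain ⟨D, O, hOD, hD, hDB, hheavy⟩ := exists_frozen_attended att A b B hB.le
  obtain ⟨X, hXD, hXB, hX⟩ := exists_inter_eq_card_eq hOD hDB
    ((card_le_card hOD).trans hD) (c := A * b) (by nlinarith)
  choose S hSB hS using fun i => exists_subset_card_eq (show min i A ≤ #B by omega)
  have hoff : ∀ i, ∀ q ∉ B, (q ∈ X ∪ S i ↔ q ∈ X ∪ S 0) := fun i q hq => by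
    have hi : q ∉ S i := fun h => hq (hSB i h)
    have h0 : q ∉ S 0 := fun h => hq (hSB 0 h)
    simp only [mem_union, hi, h0]
  refine ⟨fun i => X ∪ S i, fun i hi => ?_, fun j hj => ?_⟩
  · rw [card_union_of_disjoint (disjoint_of_subset_right (hSB i) hXB), hX, hS, min_eq_left hi]
  by_cases hj' : A * b + A ≤ #(attendable (att j))
  · obtain ⟨R, hRD, hR, hRatt⟩ := hheavy j hj hj'
    refine ⟨R, fun i => ?_⟩
    have hRi : R ⊆ attendedBy (att j) (X ∪ S i) := hRatt _ (by
      rw [union_inter_distrib_right, hXD,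
        disjoint_iff_inter_eq_empty.mp (disjoint_of_subset_left (hSB i) hDB.symm), union_empty])
    refine ⟨hRi, by rw [hR, min_eq_left (hR ▸ card_le_card hRi)], fun q hq => hoff i q ?_⟩
    exact disjoint_left.mp hDB (hRD hq)
  · have hU := hlight j hj (by omega)
    have hcongr : ∀ i, attendedBy (att j) (X ∪ S i) = attendedBy (att j) (X ∪ S 0) := fun i =>
      attendedBy_congr fun q hq => hoff i q (disjoint_right.mp hU hq)
    obtain ⟨R, hR, hRc⟩ := exists_subset_card_eq (min_le_right b #(attendedBy (att j) (X ∪ S 0)))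
    refine ⟨R, fun i => ⟨hcongr i ▸ hR, hcongr i ▸ hRc, fun q hq => hoff i q ?_⟩⟩
    exact disjoint_right.mp hU (attendedBy_subset_attendable _ _ (hR hq))

end Attention

def indicatorWord {k : ℕ} (W : Finset (Fin k)) : List ℤ :=
  List.ofFn fun q => (decide (q ∈ W)).toInt

theorem mem_indicatorWord {k : ℕ} {W : Finset (Fin k)} {t : ℤ} (ht : t ∈ indicatorWord W) :
    t = 0 ∨ t = 1 := by
  obtain ⟨q, rfl⟩ := List.mem_ofFn.mp ht
  cases decide (q ∈ W) <;> simp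

theorem count_one_indicatorWord {k : ℕ} (W : Finset (Fin k)) :
    (indicatorWord W).count 1 = #W := by
  let v : List.Vector ℤ k := ⟨indicatorWord W, List.length_ofFn⟩
  have hv : ∀ q, v.get q = (decide (q ∈ W)).toInt := fun q => by
    simp only [v, List.Vector.get, indicatorWord, List.get_ofFn]
    rfl
  refine (Fin.card_filter_univ_eq_vector_get_eq_count 1 v).symm.trans (congrArg card ?_)
  ext q
  by_cases hq : q ∈ W <;> simp [hq, hv]

theorem count_zero_add_count_one {l : List ℤ} (h : ∀ t ∈ l, t = 0 ∨ t = 1) :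
    l.count 0 + l.count 1 = l.length := by
  induction l with
  | nil => rfl
  | cons x l ih =>
    rcases h x List.mem_cons_self with rfl | rfl <;>
      simp [← ih fun t ht => h t (List.mem_cons_of_mem _ ht)] <;> omega

theorem majority_indicatorWord_append {F : List ℤ → ℤ}
    (hF : ∀ x : List ℤ, (∀ t ∈ x, t = 0 ∨ t = 1) →
      F x = if x.count 0 < x.count 1 then 1 else 0)
    {k : ℕ} (W : Finset (Fin k)) (t u : ℕ) :
    F (indicatorWord W ++ (List.replicate t 1 ++ List.replicate u 0)) =
      if k + t + u < 2 * (#W + t) then 1 else 0 := by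
  have h01 : ∀ s ∈ indicatorWord W ++ (List.replicate t 1 ++ List.replicate u 0),
      s = 0 ∨ s = 1 := by
    simp only [List.mem_append, List.mem_replicate]
    rintro s (hs | ⟨-, rfl⟩ | ⟨-, rfl⟩)
    exacts [mem_indicatorWord hs, Or.inr rfl, Or.inl rfl]
  have htot := count_zero_add_count_one h01
  have hone : (indicatorWord W ++ (List.replicate t 1 ++ List.replicate u 0)).count 1 =
      #W + t := by
    simp [List.count_append, count_one_indicatorWord, List.count_replicate]
  have hlen : (indicatorWord W).length = k := List.length_ofFn
  simp only [List.length_append, hlen, List.length_replicate] at htot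
  rw [hF _ h01]
  congr 1
  apply propext
  omega

theorem two_pow_mul_succ_mul_succ_le_half {a b n : ℕ} (hn : 4 * 4 ^ a * (b + 1) ≤ n) :
    2 ^ a * (2 ^ a + 1) * (b + 1) ≤ n / 2 := by
  have hA : 1 ≤ 2 ^ a := Nat.one_le_two_pow
  have h4 : 4 * (2 ^ a * 2 ^ a * (b + 1)) ≤ n := by
    rw [show 4 ^ a = 2 ^ a * 2 ^ a by rw [← mul_pow]; rfl] at hn
    linarith
  have : 2 ^ a * (2 ^ a + 1) * (b + 1) ≤ 2 * (2 ^ a * 2 ^ a * (b + 1)) :=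
    calc 2 ^ a * (2 ^ a + 1) * (b + 1) ≤ 2 ^ a * (2 * 2 ^ a) * (b + 1) := by gcongr; omega
      _ = 2 * (2 ^ a * 2 ^ a * (b + 1)) := by ring
  omega

namespace BAPO

variable {Sigma Out : Type} {a b : ℕ}

def IsAttendedSet (M : BAPO Sigma Out a b) (pre suf : List Sigma)
    (G : Finset (Sigma × ℕ)) : Prop :=
  G ⊆ M.cands pre suf ∧ #G = min b #(M.cands pre suf)

theorem SolvesOn.eq_of_isAttendedSet {M : BAPO Sigma Out a b} {pre pre' suf : List Sigma}
    {y y' : Out} {G : Finset (Sigma × ℕ)} (h : M.SolvesOn (pre ++ suf) y)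
    (h' : M.SolvesOn (pre' ++ suf) y') (hlen : pre'.length = pre.length) (hsuf : suf ≠ [])
    (hf : M.f pre = M.f pre') (hG : M.IsAttendedSet pre suf G)
    (hG' : M.IsAttendedSet pre' suf G) : y = y' := by
  have hk : pre.length < (pre ++ suf).length := by
    simpa using List.length_pos_of_ne_nil hsuf
  have hk' : pre.length < (pre' ++ suf).length := by
    simpa [hlen] using List.length_pos_of_ne_nil hsuf
  have e := h pre.length hk G (by simpa using hG.1) (by simpa using hG.2)
  have e' := h' pre.length hk' G (by simpa [← hlen] using hG'.1) (by simpa [← hlen] using hG'.2)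
  simp only [List.take_left' rfl, List.drop_left' rfl] at e
  simp only [List.take_left' hlen, List.drop_left' hlen, ← hf] at e'
  exact e.symm.trans e'

theorem cands_ofFn [DecidableEq Sigma] {k : ℕ} (M : BAPO Sigma Out a b) (v : Fin k → Sigma)
    (suf : List Sigma) :
    M.cands (List.ofFn v) suf =
      ({q | M.g suf k (v q) (q + 1)} : Finset (Fin k)).image fun q => (v q, (q : ℕ) + 1) := by
  ext z
  simp only [cands, mem_image, mem_filter, mem_univ, true_and, List.get_eq_getElem,
    List.length_ofFn, List.getElem_ofFn]
  constructor
  · rintro ⟨i, hg, rfl⟩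
    exact ⟨Fin.cast List.length_ofFn i, hg, rfl⟩
  · rintro ⟨q, hg, rfl⟩
    exact ⟨Fin.cast List.length_ofFn.symm q, hg, rfl⟩

def bitAttention {k : ℕ} (M : BAPO ℤ Out a b) (suf : List ℤ) (q : Fin k) (c : Bool) : Bool :=
  M.g suf k c.toInt (q + 1)

theorem isAttendedSet_indicatorWord {k : ℕ} (M : BAPO ℤ Out a b) (suf : List ℤ)
    {W R : Finset (Fin k)} (hR : R ⊆ attendedBy (M.bitAttention suf) W)
    (hRc : #R = min b #(attendedBy (M.bitAttention suf) W)) :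
    M.IsAttendedSet (indicatorWord W) suf
      (R.image fun q => ((decide (q ∈ W)).toInt, (q : ℕ) + 1)) := by
  have hinj : Function.Injective fun q : Fin k => ((decide (q ∈ W)).toInt, (q : ℕ) + 1) :=
    fun q r h => Fin.ext (by simpa using congrArg Prod.snd h)
  rw [IsAttendedSet, indicatorWord, cands_ofFn]
  exact ⟨image_subset_image hR, by
    rw [card_image_of_injective _ hinj, card_image_of_injective _ hinj, hRc]; rfl⟩

theorem not_solvesOn_majority {n : ℕ} (hn : 4 * 4 ^ a * (b + 1) ≤ n)
    {F : List ℤ → ℤ} (hF : ∀ x : List ℤ, (∀ t ∈ x, t = 0 ∨ t = 1) →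
      F x = if x.count 0 < x.count 1 then 1 else 0) :
    ¬ ∃ M : BAPO ℤ ℤ a b, ∀ x : List ℤ, x.length = n → M.SolvesOn x (F x) := by
  rintro ⟨M, hM⟩
  set A := 2 ^ a
  set k := n / 2
  have hA : 1 ≤ A := Nat.one_le_two_pow
  have hk : A * (A + 1) * (b + 1) ≤ k := two_pow_mul_succ_mul_succ_le_half hn
  have hkA : A * b + A < k := by nlinarith
  let suf : ℕ → List ℤ := fun j =>
    List.replicate (k - A * b - j) 1 ++ List.replicate (n - k - (k - A * b - j)) 0
  obtain ⟨W, hW, hfrozen⟩ :=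
    exists_prefixes_with_common_attention (fun j => M.bitAttention (suf j)) A b
      (by simpa using hk)
  obtain ⟨i, j, hij, hjA, hf⟩ := exists_lt_le_card_map_eq fun i => M.f (indicatorWord (W i))
  simp only [Fintype.card_fun, Fintype.card_bool, Fintype.card_fin] at hjA
  obtain ⟨R, hR⟩ := hfrozen i (by omega)
  obtain ⟨hRi, hRci, hagree_i⟩ := hR i
  obtain ⟨hRj, hRcj, hagree_j⟩ := hR j
  have hG := M.isAttendedSet_indicatorWord (suf i) hRi hRci
  have hG' := M.isAttendedSet_indicatorWord (suf i) hRj hRcj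
  have himage : R.image (fun q => ((decide (q ∈ W j)).toInt, (q : ℕ) + 1)) =
      R.image fun q => ((decide (q ∈ W i)).toInt, (q : ℕ) + 1) :=
    image_congr fun q hq => by simp [hagree_i q hq, hagree_j q hq]
  rw [himage] at hG'
  have hlen : ∀ l, (indicatorWord (W l) ++ suf i).length = n := fun l => by
    simp only [indicatorWord, suf, List.length_append, List.length_ofFn, List.length_replicate]
    omega
  have hsuf : suf i ≠ [] := List.ne_nil_of_length_pos (by simp [suf]; omega)
  have key := (hM _ (hlen i)).eq_of_isAttendedSet (hM _ (hlen j))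
    (List.length_ofFn.trans List.length_ofFn.symm) hsuf hf hG hG'
  rw [majority_indicatorWord_append hF, majority_indicatorWord_append hF, hW i (by omega),
    hW j hjA] at key
  split_ifs at key <;> omega

end BAPO

theorem eventually_pow_le_rpow {a : ℕ → ℕ}
    (ha : (fun n : ℕ => (a n : ℝ)) =o[atTop] fun n : ℕ => Real.log n)
    {B δ : ℝ} (hB : 1 < B) (hδ : 0 < δ) : ∀ᶠ n : ℕ in atTop, B ^ a n ≤ (n : ℝ) ^ δ := by
  have hlogB : 0 < Real.log B := Real.log_pos hB
  filter_upwards [ha.def (div_pos hδ hlogB), eventually_gt_atTop 0] with n han hn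
  rw [Real.norm_natCast, Real.norm_of_nonneg (Real.log_natCast_nonneg n)] at han
  rw [← Real.rpow_natCast, Real.rpow_def_of_pos (by linarith),
    Real.rpow_def_of_pos (by exact_mod_cast hn), Real.exp_le_exp]
  calc Real.log B * a n ≤ Real.log B * (δ / Real.log B * Real.log n) := by gcongr
    _ = Real.log n * δ := by field_simp

theorem eventually_four_mul_four_pow_mul_le {ε : ℝ} (hε0 : 0 < ε) (hε1 : ε ≤ 1) {a b : ℕ → ℕ}
    (ha : (fun n : ℕ => (a n : ℝ)) =o[atTop] fun n : ℕ => Real.log n)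
    (hb : (fun n : ℕ => (b n : ℝ)) =O[atTop] fun n : ℕ => (n : ℝ) ^ (1 - ε)) :
    ∀ᶠ n in atTop, 4 * 4 ^ a n * (b n + 1) ≤ n := by
  obtain ⟨c, hc0, hc⟩ := hb.exists_pos
  have hpow : Tendsto (fun n : ℕ => (n : ℝ) ^ (ε / 2)) atTop atTop :=
    (tendsto_rpow_atTop (half_pos hε0)).comp tendsto_natCast_atTop_atTop
  filter_upwards [eventually_pow_le_rpow ha (by norm_num : (1 : ℝ) < 4) (half_pos hε0), hc.bound,
    hpow.eventually_ge_atTop (4 * (c + 1)), eventually_ge_atTop 1] with n h4 hbn hlarge hn1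
  have hn : (1 : ℝ) ≤ n := by exact_mod_cast hn1
  have hrpow : 1 ≤ (n : ℝ) ^ (1 - ε) := Real.one_le_rpow hn (by linarith)
  rw [Real.norm_natCast, Real.norm_of_nonneg (by positivity)] at hbn
  have hb1 : (b n : ℝ) + 1 ≤ (c + 1) * (n : ℝ) ^ (1 - ε) := by
    nlinarith
  have hsplit : (n : ℝ) = (n : ℝ) ^ (ε / 2) * ((n : ℝ) ^ (ε / 2) * (n : ℝ) ^ (1 - ε)) := by
    rw [← Real.rpow_add (by linarith), ← Real.rpow_add (by linarith),
      show ε / 2 + (ε / 2 + (1 - ε)) = 1 by ring, Real.rpow_one]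
  suffices (4 : ℝ) * 4 ^ a n * (b n + 1) ≤ n by exact_mod_cast this
  calc (4 : ℝ) * 4 ^ a n * (b n + 1)
      ≤ 4 * (n : ℝ) ^ (ε / 2) * ((c + 1) * (n : ℝ) ^ (1 - ε)) := by gcongr
    _ = 4 * (c + 1) * ((n : ℝ) ^ (ε / 2) * (n : ℝ) ^ (1 - ε)) := by ring
    _ ≤ (n : ℝ) ^ (ε / 2) * ((n : ℝ) ^ (ε / 2) * (n : ℝ) ^ (1 - ε)) := by gcongr
    _ = n := hsplit.symm

/-- **Median and Mode are BAPO-hard.** Fix `ε ∈ (0,1)` and functions `a, b : ℕ → ℕ`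
with `a(n) = o(log n)` and `b(n) = O(n^{1-ε})`. Let `Med` (resp. `Mode`) be any
median (resp. mode) function on integer sequences; in particular, on `{0,1}`-valued
inputs the median and the mode equal `1` exactly when the input has a strict
majority of ones (and equal `0` otherwise). Then for all sufficiently large `n`,
there is no `(a(n), b(n))`-BAPO solving `Median` on all inputs of length `n`,
and no `(a(n), b(n))`-BAPO solving `Mode` on all inputs of length `n`. -/
theorem median_and_mode_hard (ε : ℝ) (hε0 : 0 < ε) (hε1 : ε < 1) (a b : ℕ → ℕ)
    (ha : (fun n : ℕ => (a n : ℝ)) =o[atTop] fun n : ℕ => Real.log n)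
    (hb : (fun n : ℕ => (b n : ℝ)) =O[atTop] fun n : ℕ => (n : ℝ) ^ (1 - ε))
    (Med Mode : List ℤ → ℤ)
    (hMed : ∀ x : List ℤ, (∀ t ∈ x, t = 0 ∨ t = 1) →
      Med x = if x.count 0 < x.count 1 then 1 else 0)
    (hMode : ∀ x : List ℤ, (∀ t ∈ x, t = 0 ∨ t = 1) →
      Mode x = if x.count 0 < x.count 1 then 1 else 0) :
    ∀ᶠ n in atTop,
      (¬ ∃ M : BAPO ℤ ℤ (a n) (b n),
        ∀ x : List ℤ, x.length = n → M.SolvesOn x (Med x)) ∧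
      (¬ ∃ M : BAPO ℤ ℤ (a n) (b n),
        ∀ x : List ℤ, x.length = n → M.SolvesOn x (Mode x)) := by
  filter_upwards [eventually_four_mul_four_pow_mul_le hε0 hε1.le ha hb] with n hn
  exact ⟨BAPO.not_solvesOn_majority hn hMed, BAPO.not_solvesOn_majority hn hMode⟩
end

section
/- For every m and n there exists a (0,1)-BAPO solving Match2_n over (Z_m)^n: the attention function selects a prefix element x_i with x_n + x_i ≡ 0 (mod m) whenever x_n is known from the suffix, and no prefix-oracle output is needed. -/
open Finset Filter Asymptotics

/-!
The last input token always lies in the suffix, so the attention function knows it and can select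
exactly the prefix tokens matching it. Attending to a single such token certifies a match in the
prefix, and the suffix oracle looks for a match in the suffix itself.
-/

theorem Finset.nonempty_iff_of_subset_of_card_eq_min {α : Type*} {s t : Finset α} {b : ℕ}
    (hb : b ≠ 0) (hst : s ⊆ t) (hcard : s.card = min b t.card) : s.Nonempty ↔ t.Nonempty := by
  refine ⟨fun hs => hs.mono hst, fun ht => ?_⟩
  have := ht.card_pos
  rw [← Finset.card_pos, hcard]
  omega

namespace BAPO

variable {Sigma Out : Type} {a b : ℕ}

theorem cands_nonempty_iff (M : BAPO Sigma Out a b) (pre suf : List Sigma) :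
    (M.cands pre suf).Nonempty ↔
      ∃ i : Fin pre.length, M.g suf pre.length pre[i] (i + 1) = true := by
  simp [cands, Finset.filter_nonempty_iff]

def matchLast (r : Sigma → Sigma → Prop) [DecidableRel r] : BAPO Sigma Bool a b where
  f _ _ := false
  g suf _ σ _ := suf.getLast?.any fun l => r l σ
  h _ G suf _ := decide G.Nonempty || suf.getLast?.any fun l => suf.any fun σ => r l σ

theorem matchLast_solvesOn (r : Sigma → Sigma → Prop) [DecidableRel r] (hb : b ≠ 0)
    (x : List Sigma) (hx : x ≠ []) :
    (matchLast r : BAPO Sigma Bool a b).SolvesOn x (decide (∃ σ ∈ x, r (x.getLast hx) σ)) := by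
  intro k hk G hG hcard
  have hlast : (x.drop k).getLast? = some (x.getLast hx) := by
    rw [List.getLast?_drop, if_neg (by omega), List.getLast?_eq_some_getLast]
  generalize x.getLast hx = l at hlast ⊢
  have hcands : ((matchLast r : BAPO Sigma Bool a b).cands (x.take k) (x.drop k)).Nonempty ↔
      ∃ σ ∈ x.take k, r l σ := by
    simp [cands_nonempty_iff, matchLast, hlast, List.exists_mem_iff_getElem, Fin.exists_iff]
  have hsplit : (∃ σ ∈ x, r l σ) ↔ (∃ σ ∈ x.take k, r l σ) ∨ ∃ σ ∈ x.drop k, r l σ := by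
    conv_lhs => rw [← List.take_append_drop k x]
    simp only [List.mem_append, or_and_right, exists_or]
  show (decide G.Nonempty || _) = _
  simp [Finset.nonempty_iff_of_subset_of_card_eq_min hb hG hcard, hcands, hsplit, hlast,
    ← List.decide_exists_mem]

end BAPO

/-- **Match2ₙ is BAPO-easy.** For every modulus `m` and every `n`, there exists a
`(0, 1)`-BAPO solving `Match2` on inputs `x ∈ (ℤ/m)^{n+1}`: it outputs whether
there exists an index `i` with `x_last + x_i ≡ 0 (mod m)`. No prefix-oracle
output is needed and one attended token suffices. -/
theorem match2_has_zero_one_BAPO (m n : ℕ) :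
    ∃ M : BAPO (ZMod m) Bool 0 1,
      ∀ x : Fin (n + 1) → ZMod m,
        M.SolvesOn (List.ofFn x)
          (decide (∃ i : Fin (n + 1), x (Fin.last n) + x i = 0)) := by
  refine ⟨BAPO.matchLast fun s t : ZMod m => s + t = 0, fun x => ?_⟩
  convert BAPO.matchLast_solvesOn _ one_ne_zero (List.ofFn x) (by simp) using 2
  simp only [List.getLast_ofFn, List.mem_ofFn, exists_exists_eq_and]
  rfl
end

section
/- Let m > 100 be an integer and let S, Z ⊂ Z_m be sets (identifying residues with their representatives in {0,…,m−1}) such that every element of S is at most √m, |S| ≤ √m / 2, and |Z| ≤ √m / 2. Then for every s ∈ S there exist x, y ∈ Z_m ∖ Z such that (1) x + y + s ≡ 0 (mod m), and (2) for all z ∈ Z and all s' ∈ S, x + z + s' ≢ 0 (mod m) and y + z + s' ≢ 0 (mod m). -/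
/-!
Take `y = -x - s`, so that `x + y + s = 0` holds automatically. The remaining conditions each
exclude `x` from a set of size at most `|Z|` (`x ∉ Z`, `y ∉ Z`) or `|Z| |S|` (the two conditions
on `x + z + s'` and `y + z + s'`), so at most `2|Z| + 2|Z| |S| ≤ √m + m / 2 < m` residues are
excluded and some `x` remains.
-/

open Finset

namespace Match3

variable {G : Type*} [AddCommGroup G] [DecidableEq G]

/-- The `x` for which the pair `(x, -x - s)` violates one of the required conditions. -/
def forbidden (S Z : Finset G) (s : G) : Finset G :=
  Z ∪ Z.image (fun z => -s - z) ∪ (Z ×ˢ S).image (fun p => -p.1 - p.2) ∪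
    (Z ×ˢ S).image (fun p => -s + p.1 + p.2)

theorem card_forbidden_le (S Z : Finset G) (s : G) :
    #(forbidden S Z s) ≤ 2 * #Z + 2 * (#Z * #S) := by
  have hZ : #(Z.image (fun z => -s - z)) ≤ #Z := card_image_le
  have hZS₁ : #((Z ×ˢ S).image (fun p => -p.1 - p.2)) ≤ #Z * #S :=
    card_product Z S ▸ card_image_le
  have hZS₂ : #((Z ×ˢ S).image (fun p => -s + p.1 + p.2)) ≤ #Z * #S :=
    card_product Z S ▸ card_image_le
  grw [forbidden, card_union_le, card_union_le, card_union_le]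
  omega

theorem packing_of_notMem_forbidden {S Z : Finset G} {s x : G} (hx : x ∉ forbidden S Z s) :
    x ∉ Z ∧ -x - s ∉ Z ∧ x + (-x - s) + s = 0 ∧
      ∀ z ∈ Z, ∀ s' ∈ S, x + z + s' ≠ 0 ∧ -x - s + z + s' ≠ 0 := by
  simp only [forbidden, mem_union, mem_image, mem_product, Prod.exists, not_or, not_exists,
    not_and] at hx
  obtain ⟨⟨⟨hxZ, hyZ⟩, hxZS⟩, hyZS⟩ := hx
  refine ⟨hxZ, fun h => hyZ _ h (by abel), by abel, fun z hz s' hs' => ⟨?_, ?_⟩⟩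
  · exact fun h => hxZS z s' ⟨hz, hs'⟩ (by linear_combination (norm := module) -h)
  · exact fun h => hyZS z s' ⟨hz, hs'⟩ (by linear_combination (norm := module) h)

theorem exists_packing [Fintype G] {S Z : Finset G}
    (hcard : 2 * #Z + 2 * (#Z * #S) < Fintype.card G) (s : G) :
    ∃ x y : G, x ∉ Z ∧ y ∉ Z ∧ x + y + s = 0 ∧
      ∀ z ∈ Z, ∀ s' ∈ S, x + z + s' ≠ 0 ∧ y + z + s' ≠ 0 := by
  obtain ⟨x, -, hx⟩ := exists_mem_notMem_of_card_lt_card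
    ((card_forbidden_le S Z s).trans_lt (card_univ (α := G) ▸ hcard))
  exact ⟨x, -x - s, packing_of_notMem_forbidden hx⟩

end Match3

theorem two_mul_add_two_mul_mul_lt {a b m : ℕ} (hm : 4 < m) (ha : (a : ℝ) ≤ √m / 2)
    (hb : (b : ℝ) ≤ √m / 2) : 2 * a + 2 * (a * b) < m := by
  have hsq : √(m : ℝ) ^ 2 = m := Real.sq_sqrt (Nat.cast_nonneg m)
  have htwo : 2 < √(m : ℝ) := by
    rw [Real.lt_sqrt zero_le_two]
    exact_mod_cast (by omega : 2 ^ 2 < m)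
  have hab : (a : ℝ) * b ≤ √m / 2 * (√m / 2) := by gcongr
  exact_mod_cast (by nlinarith : (2 * a + 2 * (a * b) : ℝ) < m)

theorem match3_packing_general (m : ℕ) (hm : 100 < m) (S Z : Finset (ZMod m))
    (hS_card : (S.card : ℝ) ≤ Real.sqrt m / 2)
    (hZ_card : (Z.card : ℝ) ≤ Real.sqrt m / 2) :
    ∀ s ∈ S, ∃ x y : ZMod m, x ∉ Z ∧ y ∉ Z ∧
      x + y + s = 0 ∧
      (∀ z ∈ Z, ∀ s' ∈ S, x + z + s' ≠ 0 ∧ y + z + s' ≠ 0) := by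
  intro s _
  have : NeZero m := ⟨by omega⟩
  refine Match3.exists_packing ?_ s
  rw [ZMod.card]
  exact two_mul_add_two_mul_mul_lt (by omega) hZ_card hS_card

/-- **Packing lemma for Match3.** Let `m > 100` and let `S, Z ⊂ ℤ/m` be sets
(identifying residues with their representatives in `{0, …, m-1}` via `ZMod.val`)
such that every element of `S` is at most `√m`, `|S| ≤ √m / 2`, and `|Z| ≤ √m / 2`.
Then for every `s ∈ S` there exist `x, y ∈ ℤ/m ∖ Z` with
(1) `x + y + s ≡ 0 (mod m)`, and
(2) for all `z ∈ Z` and all `s' ∈ S`, `x + z + s' ≢ 0` and `y + z + s' ≢ 0 (mod m)`. -/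
theorem match3_packing (m : ℕ) (hm : 100 < m) (S Z : Finset (ZMod m))
    (hS_small : ∀ s ∈ S, (s.val : ℝ) ≤ Real.sqrt m)
    (hS_card : (S.card : ℝ) ≤ Real.sqrt m / 2)
    (hZ_card : (Z.card : ℝ) ≤ Real.sqrt m / 2) :
    ∀ s ∈ S, ∃ x y : ZMod m, x ∉ Z ∧ y ∉ Z ∧
      x + y + s = 0 ∧
      (∀ z ∈ Z, ∀ s' ∈ S, x + z + s' ≠ 0 ∧ y + z + s' ≠ 0) :=
  match3_packing_general m hm S Z hS_card hZ_card
end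

section
/- Let Σ be an alphabet of size k. There exists a (2k, 0)-BAPO solving Unique: the prefix oracle transmits two k-bit strings indicating which alphabet symbols occur exactly once in the prefix and which occur at least once in the prefix, and this suffices for the suffix oracle to always output a correct answer. -/
open Finset Filter Asymptotics

/-- A correct answer for `Unique` on input `x`: either `some t` for a token `t`
occurring exactly once in `x`, or `none` (the token `∅`) if no token occurs
exactly once. -/
def UniqueGood (k : ℕ) (x : List (Fin k)) (y : Option (Fin k)) : Prop :=
  (∃ t : Fin k, y = some t ∧ x.count t = 1) ∨
    (y = none ∧ ∀ t : Fin k, x.count t ≠ 1)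

/-- Prefix oracle for `Unique`: bit `t` says `t` occurs exactly once in the prefix,
bit `k + t` says `t` occurs at least once. -/
def uniqueBits (k : ℕ) (pre : List (Fin k)) : Fin (2 * k) → Bool := fun i =>
  if h : i.val < k then decide (pre.count ⟨i.val, h⟩ = 1)
  else decide (1 ≤ pre.count ⟨i.val - k, by have := i.isLt; omega⟩)

/-- The predicate the suffix oracle checks for each token. -/
def uniquePred (k : ℕ) (bits : Fin (2 * k) → Bool) (suf : List (Fin k)) (t : Fin k) :
    Bool :=
  (bits ⟨t.val, by have := t.isLt; omega⟩ && (suf.count t == 0)) ||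
  (!(bits ⟨k + t.val, by have := t.isLt; omega⟩) && (suf.count t == 1))

/-- Suffix oracle for `Unique`. -/
def uniqueH (k : ℕ) (bits : Fin (2 * k) → Bool) (suf : List (Fin k)) :
    Option (Fin k) :=
  (List.finRange k).find? (uniquePred k bits suf)

lemma uniquePred_iff (k : ℕ) (pre suf : List (Fin k)) (t : Fin k) :
    uniquePred k (uniqueBits k pre) suf t = true ↔
      pre.count t + suf.count t = 1 := by
  unfold uniquePred uniqueBits
  rw [dif_pos t.isLt, dif_neg (by omega : ¬ k + t.val < k)]
  have e1 : (⟨t.val, t.isLt⟩ : Fin k) = t := rfl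
  have e2 : (⟨k + t.val - k, by have := t.isLt; omega⟩ : Fin k) = t := by
    ext; simp
  rw [e1, e2]
  simp only [Bool.or_eq_true, Bool.and_eq_true, decide_eq_true_eq, beq_iff_eq,
    Bool.not_eq_true', decide_eq_false_iff_not]
  omega

/-- **Unique has a `(2k, 0)`-BAPO.** Over an alphabet of size `k` there exists a
BAPO with prefix bandwidth `2k` bits and attention bandwidth `0` solving `Unique`:
the prefix oracle can transmit which symbols occur exactly once in the prefix and
which occur at least once, and this lets the suffix oracle always output a
correct answer. -/
theorem unique_upper_bound (k : ℕ) :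
    ∃ M : BAPO (Fin k) (Option (Fin k)) (2 * k) 0,
      ∀ x : List (Fin k), M.SolvesOnP x (UniqueGood k x) := by
  classical
  refine ⟨{ f := uniqueBits k, g := fun _ _ _ _ => false,
            h := fun bits _ suf _ => uniqueH k bits suf }, ?_⟩
  intro x n hn G hG hcard
  simp only
  have hsplit : ∀ t : Fin k, x.count t = (x.take n).count t + (x.drop n).count t := by
    intro t
    conv_lhs => rw [← List.take_append_drop n x]
    exact List.count_append ..
  rcases hfind : uniqueH k (uniqueBits k (x.take n)) (x.drop n) with _ | t
  · right
    refine ⟨rfl, fun t ht => ?_⟩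
    have := List.find?_eq_none.mp hfind t (List.mem_finRange t)
    rw [hsplit t] at ht
    exact this ((uniquePred_iff k _ _ t).mpr ht)
  · left
    refine ⟨t, rfl, ?_⟩
    rw [hsplit t]
    exact (uniquePred_iff k _ _ t).mp (List.find?_some hfind)
end

section
/- Let Σ be an alphabet of size k. There exists a (k, 0)-BAPO solving SetDiff: the prefix oracle transmits a k-bit string indicating, for each alphabet symbol, whether (as far as the prefix reveals) it occurs in the first part of the input but not in the second, and this suffices for the suffix oracle to always output a correct answer. -/
open Finset Filter Asymptotics

/-- A correct answer for `SetDiff` on the instance `c | d`: either `some t` for a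
token `t` occurring in `c` but not in `d`, or `none` (the token `∅`) if every
token of `c` occurs in `d`. -/
def SetDiffGood (k : ℕ) (c d : List (Fin k)) (y : Option (Fin k)) : Prop :=
  (∃ t : Fin k, y = some t ∧ t ∈ c ∧ t ∉ d) ∨
    (y = none ∧ ∀ t ∈ c, t ∈ d)


/-!
Write an input over `Option α` as `left | right`, split at its first divider `none`; a
witness is a token of `left` missing from `right`. Each split point of a SetDiff instance
falls on one side of its only divider. If the divider lies in the suffix, the prefix is
entirely in `left`, so one bit per token (whether it occurs in the prefix) suffices. If
the divider lies in the prefix, the witnesses are the prefix's own witnesses that do not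
occur in the suffix. In both cases the bit "is `t` a witness of the prefix, read as an
instance" is all the suffix oracle needs, and no attention is used.
-/

namespace SetDiff

variable {α : Type*}

def left (l : List (Option α)) : List (Option α) :=
  l.takeWhile Option.isSome

def right (l : List (Option α)) : List (Option α) :=
  (l.dropWhile Option.isSome).tail

lemma left_append_of_none_mem {l : List (Option α)} (h : none ∈ l) (r : List (Option α)) :
    left (l ++ r) = left l := by
  induction l with
  | nil => simp at h
  | cons a l ih => cases a <;> simp_all [left]

lemma left_append_of_none_notMem {l : List (Option α)} (h : none ∉ l) (r : List (Option α)) :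
    left (l ++ r) = l ++ left r := by
  induction l with
  | nil => rfl
  | cons a l ih => cases a <;> simp_all [left]

lemma right_append_of_none_mem {l : List (Option α)} (h : none ∈ l) (r : List (Option α)) :
    right (l ++ r) = right l ++ r := by
  induction l with
  | nil => simp at h
  | cons a l ih => cases a <;> simp_all [right]

lemma right_append_of_none_notMem {l : List (Option α)} (h : none ∉ l) (r : List (Option α)) :
    right (l ++ r) = right r := by
  induction l with
  | nil => rfl
  | cons a l ih => cases a <;> simp_all [right]

lemma left_of_none_notMem {l : List (Option α)} (h : none ∉ l) : left l = l := by
  simpa [left] using left_append_of_none_notMem h []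

lemma right_of_none_notMem {l : List (Option α)} (h : none ∉ l) : right l = [] := by
  simpa [right] using right_append_of_none_notMem h []

def encode (c d : List α) : List (Option α) :=
  c.map some ++ [none] ++ d.map some

lemma count_none_encode [DecidableEq α] (c d : List α) : (encode c d).count none = 1 := by
  simp [encode, List.count_eq_zero_of_not_mem]

lemma left_encode (c d : List α) : left (encode c d) = c.map some := by
  rw [encode, List.append_assoc, left_append_of_none_notMem (by simp)]
  simp [left]

lemma right_encode (c d : List α) : right (encode c d) = d.map some := by
  rw [encode, List.append_assoc, right_append_of_none_notMem (by simp)]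
  simp [right]

def IsWitness (x : List (Option α)) (t : α) : Prop :=
  some t ∈ left x ∧ some t ∉ right x

instance [DecidableEq α] (x : List (Option α)) : DecidablePred (IsWitness x) :=
  fun _ => inferInstanceAs (Decidable (_ ∧ _))

lemma isWitness_encode_iff {c d : List α} {t : α} :
    IsWitness (encode c d) t ↔ t ∈ c ∧ t ∉ d := by
  simp [IsWitness, left_encode, right_encode]

def SuffixTest [DecidableEq α] (bits : α → Bool) (suf : List (Option α)) (t : α) : Prop :=
  if none ∈ suf then (bits t ∨ some t ∈ left suf) ∧ some t ∉ right suf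
  else bits t ∧ some t ∉ suf

instance [DecidableEq α] (bits : α → Bool) (suf : List (Option α)) :
    DecidablePred (SuffixTest bits suf) :=
  fun _ => inferInstanceAs (Decidable (ite _ _ _))

lemma suffixTest_iff_isWitness_append [DecidableEq α] {pre suf : List (Option α)}
    (hsplit : none ∈ pre ↔ none ∉ suf) (t : α) :
    SuffixTest (fun t => decide (IsWitness pre t)) suf t ↔ IsWitness (pre ++ suf) t := by
  by_cases hsuf : none ∈ suf
  · have hpre : none ∉ pre := fun h => hsplit.1 h hsuf
    simp [SuffixTest, IsWitness, hsuf, left_append_of_none_notMem hpre,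
      right_append_of_none_notMem hpre, left_of_none_notMem hpre, right_of_none_notMem hpre]
  · have hpre : none ∈ pre := hsplit.2 hsuf
    simp only [SuffixTest, hsuf, if_false, decide_eq_true_iff]
    simp only [IsWitness, left_append_of_none_mem hpre, right_append_of_none_mem hpre,
      List.mem_append]
    tauto

end SetDiff

lemma List.mem_take_iff_notMem_drop_of_count_eq_one {α : Type*} [BEq α] [LawfulBEq α]
    {l : List α} {a : α} (h : l.count a = 1) (j : ℕ) : a ∈ l.take j ↔ a ∉ l.drop j := by
  rw [← List.take_append_drop j l, List.count_append] at h
  rw [← List.count_pos_iff, ← List.count_eq_zero]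
  omega

lemma setDiffGood_find? {k : ℕ} {c d : List (Fin k)} {p : Fin k → Bool}
    (hp : ∀ t, p t = true ↔ t ∈ c ∧ t ∉ d) :
    SetDiffGood k c d ((List.finRange k).find? p) := by
  rcases hfind : (List.finRange k).find? p with _ | t
  · refine Or.inr ⟨rfl, fun t htc => ?_⟩
    by_contra htd
    exact List.find?_eq_none.1 hfind t (List.mem_finRange t) ((hp t).2 ⟨htc, htd⟩)
  · exact Or.inl ⟨t, rfl, (hp t).1 (List.find?_some hfind)⟩

def setDiffBAPO (k : ℕ) : BAPO (Option (Fin k)) (Option (Fin k)) k 0 where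
  f pre t := decide (SetDiff.IsWitness pre t)
  g _ _ _ _ := false
  h bits _ suf _ := (List.finRange k).find? fun t => decide (SetDiff.SuffixTest bits suf t)

/-- **SetDiff has a `(k, 0)`-BAPO.** Over an alphabet of size `k` there exists a
BAPO with prefix bandwidth `k` bits and attention bandwidth `0` solving `SetDiff`:
the prefix oracle can transmit, for each symbol, whether (as far as the prefix
reveals) it occurs in the first part but not the second, and this lets the suffix
oracle always output a correct answer. Instances `c | d` are encoded over
`Option (Fin k)` with `none` the divider token. -/
theorem setdiff_upper_bound (k : ℕ) :
    ∃ M : BAPO (Option (Fin k)) (Option (Fin k)) k 0,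
      ∀ c d : List (Fin k),
        M.SolvesOnP (c.map some ++ [none] ++ d.map some) (SetDiffGood k c d) := by
  refine ⟨setDiffBAPO k, fun c d j _ _ _ _ => setDiffGood_find? fun t => ?_⟩
  have hsplit := List.mem_take_iff_notMem_drop_of_count_eq_one (SetDiff.count_none_encode c d) j
  refine decide_eq_true_iff.trans <| (SetDiff.suffixTest_iff_isWitness_append hsplit t).trans ?_
  rw [List.take_append_drop]
  exact SetDiff.isWitness_encode_iff
end
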